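/- arXiv:2506.22911 — 10 statements merged into one kernel-verified Lean document; each statement's English description precedes it below -/
import Mathlib

section
/- Let M^d = (x^d, p^d) be a truthful direct mechanism. Then there exists a menu mechanism M^m = {p^m_i} satisfying partial convexity and no-buy-no-pay such that M^d is equivalent to M^m. -/
open Finset

section MMaux

variable {n : ℕ} {d : Fin n → ℕ}

/-- Extend `tmi` (types of players other than `i`) with `ti` for player `i`. -/
noncomputable def MMext (d : Fin n → ℕ) (i : Fin n)
    (tmi : ∀ j : {j : Fin n // j ≠ i}, Fin (d j.1) → ℝ) (ti : Fin (d i) → ℝ) :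
    ∀ j, Fin (d j) → ℝ :=
  Function.update (fun j => if h : j = i then 0 else tmi ⟨j, h⟩) i ti

lemma MMext_update (i : Fin n)
    (tmi : ∀ j : {j : Fin n // j ≠ i}, Fin (d j.1) → ℝ) (ti ti' : Fin (d i) → ℝ) :
    Function.update (MMext d i tmi ti) i ti' = MMext d i tmi ti' := by
  simp [MMext, Function.update_idem]

lemma MMext_mem {T : ∀ i : Fin n, Set (Fin (d i) → ℝ)} (i : Fin n)
    (tmi : ∀ j : {j : Fin n // j ≠ i}, Fin (d j.1) → ℝ)
    (htmi : ∀ j, tmi j ∈ T j.1) {ti : Fin (d i) → ℝ} (hti : ti ∈ T i) :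
    ∀ j, MMext d i tmi ti j ∈ T j := by
  intro j
  by_cases h : j = i
  · subst h; simpa [MMext] using hti
  · simp [MMext, Function.update_of_ne h, h]
    exact htmi ⟨j, h⟩

lemma MMext_eq_self (i : Fin n) (t : ∀ j, Fin (d j) → ℝ) :
    MMext d i (fun j => t j.1) (t i) = t := by
  funext j
  by_cases h : j = i
  · subst h; simp [MMext]
  · simp [MMext, Function.update_of_ne h, h]

/-- The utility of player `i` with type `ti`, other types `tmi`, under truthful report. -/
noncomputable def MMU (d : Fin n → ℕ) (c : ∀ i : Fin n, (Fin (d i) → ℝ) → ℝ)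
    (xd : (∀ i, Fin (d i) → ℝ) → ∀ i, Fin (d i) → ℝ)
    (pd : (∀ i, Fin (d i) → ℝ) → Fin n → ℝ)
    (i : Fin n) (tmi : ∀ j : {j : Fin n // j ≠ i}, Fin (d j.1) → ℝ)
    (ti : Fin (d i) → ℝ) : ℝ :=
  (∑ k, xd (MMext d i tmi ti) i k * ti k) + c i (xd (MMext d i tmi ti) i)
    - pd (MMext d i tmi ti) i

end MMaux

/-- A truthful direct mechanism is in some sense a menu mechanism.
If the direct mechanism `(xd, pd)` is truthful (IR and IC), then there exists a menu
mechanism `pm` satisfying partial convexity and no-buy-no-pay such that `(xd, pd)`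
is equivalent to `pm`. -/
theorem truthful_is_menu_mechanism
    (n : ℕ) (d : Fin n → ℕ)
    (T X : ∀ i : Fin n, Set (Fin (d i) → ℝ))
    (hTne : ∀ i, (T i).Nonempty) (hTconv : ∀ i, Convex ℝ (T i))
    (hTcomp : ∀ i, IsCompact (T i))
    (hXne : ∀ i, (X i).Nonempty) (hXconv : ∀ i, Convex ℝ (X i))
    (hXcomp : ∀ i, IsCompact (X i))
    (hX0 : ∀ i, (0 : Fin (d i) → ℝ) ∈ X i)
    (c : ∀ i : Fin n, (Fin (d i) → ℝ) → ℝ)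
    (hc : ∀ i, ContinuousOn (c i) (X i))
    (hc0 : ∀ i, c i (0 : Fin (d i) → ℝ) = 0)
    -- direct mechanism mapping types into outcomes
    (xd : (∀ i, Fin (d i) → ℝ) → ∀ i, Fin (d i) → ℝ)
    (pd : (∀ i, Fin (d i) → ℝ) → Fin n → ℝ)
    (hxd : ∀ t : ∀ i, Fin (d i) → ℝ, (∀ j, t j ∈ T j) → ∀ i, xd t i ∈ X i)
    -- IR
    (hIR : ∀ (t' : ∀ i, Fin (d i) → ℝ), (∀ j, t' j ∈ T j) → ∀ i : Fin n, ∀ ti ∈ T i,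
      0 ≤ (∑ k, xd (Function.update t' i ti) i k * ti k)
          + c i (xd (Function.update t' i ti) i) - pd (Function.update t' i ti) i)
    -- IC
    (hIC : ∀ (t' : ∀ i, Fin (d i) → ℝ), (∀ j, t' j ∈ T j) → ∀ i : Fin n, ∀ ti ∈ T i,
      (∑ k, xd t' i k * ti k) + c i (xd t' i) - pd t' i ≤
      (∑ k, xd (Function.update t' i ti) i k * ti k)
          + c i (xd (Function.update t' i ti) i) - pd (Function.update t' i ti) i) :
    ∃ pm : ∀ i : Fin n, (Fin (d i) → ℝ) →
        (∀ j : {j : Fin n // j ≠ i}, Fin (d j.1) → ℝ) → ℝ,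
      -- partial convexity
      (∀ (i : Fin n) (tmi : ∀ j : {j : Fin n // j ≠ i}, Fin (d j.1) → ℝ),
        (∀ j, tmi j ∈ T j.1) →
        ConvexOn ℝ (X i) (fun x => pm i x tmi - c i x)) ∧
      -- no-buy-no-pay
      (∀ (i : Fin n) (tmi : ∀ j : {j : Fin n // j ≠ i}, Fin (d j.1) → ℝ),
        (∀ j, tmi j ∈ T j.1) → pm i 0 tmi ≤ 0) ∧
      -- `(xd, pd)` is equivalent to `pm`
      (∀ t : ∀ i, Fin (d i) → ℝ, (∀ j, t j ∈ T j) → ∀ i : Fin n,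
        xd t i ∈ X i ∧
        (∀ x ∈ X i,
          (∑ k, x k * t i k) + c i x - pm i x (fun j => t j.1) ≤
          (∑ k, xd t i k * t i k) + c i (xd t i) - pm i (xd t i) (fun j => t j.1)) ∧
        pd t i = pm i (xd t i) (fun j => t j.1)) := by
  classical
  set U := MMU d c xd pd with hU
  -- the menu set function
  set S : ∀ i : Fin n, (Fin (d i) → ℝ) →
      (∀ j : {j : Fin n // j ≠ i}, Fin (d j.1) → ℝ) → Set ℝ :=
    fun i x tmi => (fun ti => (∑ k, x k * ti k) - U i tmi ti) '' (T i) with hS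
  -- nonempty
  have hSne : ∀ i x tmi, (S i x tmi).Nonempty := fun i x tmi => (hTne i).image _
  -- U is nonnegative on T i when tmi ∈ T
  have hU0 : ∀ (i : Fin n) (tmi : ∀ j : {j : Fin n // j ≠ i}, Fin (d j.1) → ℝ),
      (∀ j, tmi j ∈ T j.1) → ∀ ti ∈ T i, 0 ≤ U i tmi ti := by
    intro i tmi htmi ti hti
    have h := hIR (MMext d i tmi ti) (MMext_mem i tmi htmi hti) i ti hti
    rw [MMext_update] at h
    exact h
  -- bounded above
  have hSbdd : ∀ (i : Fin n) (tmi : ∀ j : {j : Fin n // j ≠ i}, Fin (d j.1) → ℝ),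
      (∀ j, tmi j ∈ T j.1) → ∀ x, BddAbove (S i x tmi) := by
    intro i tmi htmi x
    have hcont : Continuous fun ti : Fin (d i) → ℝ => ∑ k, x k * ti k :=
      continuous_finset_sum _ fun k _ => continuous_const.mul (continuous_apply k)
    obtain ⟨M, hM⟩ := ((hTcomp i).image hcont).bddAbove
    refine ⟨M, ?_⟩
    rintro y ⟨ti, hti, rfl⟩
    exact le_trans (sub_le_self _ (hU0 i tmi htmi ti hti))
      (hM ⟨ti, hti, rfl⟩)
  refine ⟨fun i x tmi => c i x + sSup (S i x tmi), ?_, ?_, ?_⟩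
  · -- partial convexity
    intro i tmi htmi
    have heq : (fun x => (c i x + sSup (S i x tmi)) - c i x) =
        fun x => sSup (S i x tmi) := by funext x; ring
    rw [heq]
    refine ⟨hXconv i, ?_⟩
    intro x hx y hy a b ha hb hab
    refine csSup_le (hSne _ _ _) ?_
    rintro z ⟨ti, hti, rfl⟩
    show (∑ k, (a • x + b • y) k * ti k) - U i tmi ti ≤
      a • sSup (S i x tmi) + b • sSup (S i y tmi)
    have hip : (∑ k, (a • x + b • y) k * ti k) =
        a * (∑ k, x k * ti k) + b * (∑ k, y k * ti k) := by
      simp only [Pi.add_apply, Pi.smul_apply, smul_eq_mul, add_mul, mul_assoc,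
        Finset.sum_add_distrib, Finset.mul_sum]
    have h1 : (∑ k, x k * ti k) - U i tmi ti ≤ sSup (S i x tmi) :=
      le_csSup (hSbdd i tmi htmi x) ⟨ti, hti, rfl⟩
    have h2 : (∑ k, y k * ti k) - U i tmi ti ≤ sSup (S i y tmi) :=
      le_csSup (hSbdd i tmi htmi y) ⟨ti, hti, rfl⟩
    have h1' := mul_le_mul_of_nonneg_left h1 ha
    have h2' := mul_le_mul_of_nonneg_left h2 hb
    rw [mul_sub] at h1' h2'
    have hsum : a * U i tmi ti + b * U i tmi ti = U i tmi ti := by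
      rw [← add_mul, hab, one_mul]
    rw [smul_eq_mul, smul_eq_mul]
    linarith [hip]
  · -- no-buy-no-pay
    intro i tmi htmi
    show c i 0 + sSup (S i 0 tmi) ≤ 0
    rw [hc0 i, zero_add]
    refine Real.sSup_nonpos ?_
    rintro y ⟨ti, hti, rfl⟩
    show (∑ k, (0 : Fin (d i) → ℝ) k * ti k) - U i tmi ti ≤ 0
    have h := hU0 i tmi htmi ti hti
    simp only [Pi.zero_apply, zero_mul, Finset.sum_const_zero, zero_sub]
    linarith
  · -- equivalence
    intro t ht i
    set tmi : ∀ j : {j : Fin n // j ≠ i}, Fin (d j.1) → ℝ := fun j => t j.1 with htmi_def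
    have htmi : ∀ j, tmi j ∈ T j.1 := fun j => ht j.1
    have hext : ∀ ti : Fin (d i) → ℝ, MMext d i tmi ti = Function.update t i ti := by
      intro ti
      rw [← MMext_eq_self i t, MMext_update]
    have hext_self : MMext d i tmi (t i) = t := MMext_eq_self i t
    -- the sup at xd t equals pd t i - c i (xd t i)
    have hsup : sSup (S i (xd t i) tmi) = pd t i - c i (xd t i) := by
      apply le_antisymm
      · refine csSup_le (hSne _ _ _) ?_
        rintro y ⟨ti, hti, rfl⟩
        show (∑ k, xd t i k * ti k) - U i tmi ti ≤ pd t i - c i (xd t i)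
        have h := hIC t ht i ti hti
        rw [← hext ti] at h
        have hUd : U i tmi ti = (∑ k, xd (MMext d i tmi ti) i k * ti k)
            + c i (xd (MMext d i tmi ti) i) - pd (MMext d i tmi ti) i := rfl
        rw [hUd]
        linarith
      · refine le_csSup (hSbdd i tmi htmi _) ⟨t i, ht i, ?_⟩
        show (∑ k, xd t i k * t i k) - U i tmi (t i) = pd t i - c i (xd t i)
        have hUd : U i tmi (t i) = (∑ k, xd (MMext d i tmi (t i)) i k * t i k)
            + c i (xd (MMext d i tmi (t i)) i) - pd (MMext d i tmi (t i)) i := rfl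
        rw [hUd, hext_self]
        ring
    refine ⟨hxd t ht i, ?_, ?_⟩
    · intro x hx
      show (∑ k, x k * t i k) + c i x - (c i x + sSup (S i x tmi)) ≤
        (∑ k, xd t i k * t i k) + c i (xd t i) - (c i (xd t i) + sSup (S i (xd t i) tmi))
      have h1 : (∑ k, x k * t i k) - U i tmi (t i) ≤ sSup (S i x tmi) :=
        le_csSup (hSbdd i tmi htmi x) ⟨t i, ht i, rfl⟩
      have hUval : U i tmi (t i) =
          (∑ k, xd t i k * t i k) + c i (xd t i) - pd t i := by
        have hUd : U i tmi (t i) = (∑ k, xd (MMext d i tmi (t i)) i k * t i k)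
            + c i (xd (MMext d i tmi (t i)) i) - pd (MMext d i tmi (t i)) i := rfl
        rw [hUd, hext_self]
      rw [hsup]
      rw [hUval] at h1
      linarith
    · show pd t i = c i (xd t i) + sSup (S i (xd t i) tmi)
      rw [hsup]; ring
end

section
/- (Equivalence between mechanism classes.) Let 𝓜^{d,t} be the class of all truthful direct mechanisms and 𝓜^{m,pn} the class of all menu mechanisms satisfying partial convexity and no-buy-no-pay. Then: (i) for every truthful direct mechanism M^d ∈ 𝓜^{d,t} there exists a menu mechanism M^m ∈ 𝓜^{m,pn} such that M^d is equivalent to M^m; and (ii) for every menu mechanism M^m ∈ 𝓜^{m,pn} and every direct mechanism M^d equivalent to M^m, the mechanism M^d is truthful. -/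
open Finset

section Aux
variable {m : ℕ}

noncomputable def supS (T : Set (Fin m → ℝ)) (U : (Fin m → ℝ) → ℝ) (x : Fin m → ℝ) : ℝ :=
  sSup ((fun s => (∑ k, x k * s k) - U s) '' T)

lemma aux_bdd (T : Set (Fin m → ℝ)) (hT : IsCompact T) (U : (Fin m → ℝ) → ℝ)
    (hU : ∀ s ∈ T, 0 ≤ U s) (x : Fin m → ℝ) :
    BddAbove ((fun s => (∑ k, x k * s k) - U s) '' T) := by
  have hcont : Continuous fun s : Fin m → ℝ => ∑ k, x k * s k :=
    continuous_finset_sum _ fun k _ => continuous_const.mul (continuous_apply k)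
  obtain ⟨M, hM⟩ := (hT.image hcont).bddAbove
  refine ⟨M, ?_⟩
  rintro _ ⟨s, hs, rfl⟩
  beta_reduce
  exact le_trans (by linarith [hU s hs]) (hM ⟨s, hs, rfl⟩)

lemma aux_convexOn (X : Set (Fin m → ℝ)) (hX : Convex ℝ X) (T : Set (Fin m → ℝ))
    (hTne : T.Nonempty) (U : (Fin m → ℝ) → ℝ)
    (hB : ∀ x : Fin m → ℝ, BddAbove ((fun s => (∑ k, x k * s k) - U s) '' T)) :
    ConvexOn ℝ X (supS T U) := by
  refine ⟨hX, fun x _ y _ a b ha hb hab => ?_⟩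
  refine csSup_le (hTne.image _) ?_
  rintro _ ⟨s, hs, rfl⟩
  have hx : (∑ k, x k * s k) - U s ≤ supS T U x := le_csSup (hB x) ⟨s, hs, rfl⟩
  have hy : (∑ k, y k * s k) - U s ≤ supS T U y := le_csSup (hB y) ⟨s, hs, rfl⟩
  have hsum : ∑ k, (a • x + b • y) k * s k
      = a * ∑ k, x k * s k + b * ∑ k, y k * s k := by
    simp only [Pi.add_apply, Pi.smul_apply, smul_eq_mul, add_mul, Finset.sum_add_distrib,
      Finset.mul_sum, mul_assoc]
  show (∑ k, (a • x + b • y) k * s k) - U s ≤ _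
  rw [hsum]
  have h1 := mul_le_mul_of_nonneg_left hx ha
  have h2 := mul_le_mul_of_nonneg_left hy hb
  simp only [smul_eq_mul]
  have hU3 : a * U s + b * U s = U s := by rw [← add_mul, hab, one_mul]
  linarith
end Aux

section Prof
variable {n : ℕ} {d : Fin n → ℕ}

noncomputable def baseP (i : Fin n) (tmi : ∀ j : {j : Fin n // j ≠ i}, Fin (d j.1) → ℝ) :
    ∀ j, Fin (d j) → ℝ :=
  fun j => if h : j = i then 0 else tmi ⟨j, h⟩

noncomputable def Pr (i : Fin n) (tmi : ∀ j : {j : Fin n // j ≠ i}, Fin (d j.1) → ℝ)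
    (s : Fin (d i) → ℝ) : ∀ j, Fin (d j) → ℝ :=
  Function.update (baseP i tmi) i s

lemma Pr_mem (T : ∀ i : Fin n, Set (Fin (d i) → ℝ)) {i : Fin n}
    {tmi : ∀ j : {j : Fin n // j ≠ i}, Fin (d j.1) → ℝ}
    (htmi : ∀ j, tmi j ∈ T j.1) {s : Fin (d i) → ℝ} (hs : s ∈ T i) :
    ∀ j, Pr i tmi s j ∈ T j := by
  intro j
  rcases eq_or_ne j i with rfl | hj
  · simpa [Pr] using hs
  · rw [Pr, Function.update_of_ne hj]
    simpa [baseP, hj] using htmi ⟨j, hj⟩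

lemma Pr_update {i : Fin n} {tmi : ∀ j : {j : Fin n // j ≠ i}, Fin (d j.1) → ℝ}
    (s0 s : Fin (d i) → ℝ) :
    Function.update (Pr i tmi s0) i s = Pr i tmi s := by
  simp [Pr, Function.update_idem]

lemma Pr_eq_update {i : Fin n} (t : ∀ j, Fin (d j) → ℝ) (s : Fin (d i) → ℝ) :
    Pr i (fun j => t j.1) s = Function.update t i s := by
  funext j
  rcases eq_or_ne j i with rfl | hj
  · simp [Pr]
  · rw [Pr, Function.update_of_ne hj, Function.update_of_ne hj]
    simp [baseP, hj]
end Prof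

section Prof2
variable {n : ℕ} {d : Fin n → ℕ}
noncomputable def Uf (xd : (∀ i, Fin (d i) → ℝ) → ∀ i, Fin (d i) → ℝ)
    (pd : (∀ i, Fin (d i) → ℝ) → Fin n → ℝ) (c : ∀ i : Fin n, (Fin (d i) → ℝ) → ℝ)
    (i : Fin n) (tmi : ∀ j : {j : Fin n // j ≠ i}, Fin (d j.1) → ℝ)
    (s : Fin (d i) → ℝ) : ℝ :=
  (∑ k, xd (Pr i tmi s) i k * s k) + c i (xd (Pr i tmi s) i) - pd (Pr i tmi s) i
end Prof2
/-- Equivalence between mechanism classes.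
(i) Every truthful direct mechanism is equivalent to some menu mechanism satisfying
partial convexity and no-buy-no-pay; (ii) every direct mechanism equivalent to a menu
mechanism satisfying partial convexity and no-buy-no-pay is truthful. -/
theorem equivalence_between_mechanism_classes
    (n : ℕ) (d : Fin n → ℕ)
    (T X : ∀ i : Fin n, Set (Fin (d i) → ℝ))
    (hTne : ∀ i, (T i).Nonempty) (hTconv : ∀ i, Convex ℝ (T i))
    (hTcomp : ∀ i, IsCompact (T i))
    (hXne : ∀ i, (X i).Nonempty) (hXconv : ∀ i, Convex ℝ (X i))
    (hXcomp : ∀ i, IsCompact (X i))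
    (hX0 : ∀ i, (0 : Fin (d i) → ℝ) ∈ X i)
    (c : ∀ i : Fin n, (Fin (d i) → ℝ) → ℝ)
    (hc : ∀ i, ContinuousOn (c i) (X i))
    (hc0 : ∀ i, c i (0 : Fin (d i) → ℝ) = 0) :
    -- (i) each truthful direct mechanism is equivalent to a menu mechanism in 𝓜^{m,pn}
    (∀ (xd : (∀ i, Fin (d i) → ℝ) → ∀ i, Fin (d i) → ℝ)
       (pd : (∀ i, Fin (d i) → ℝ) → Fin n → ℝ),
      (∀ t : ∀ i, Fin (d i) → ℝ, (∀ j, t j ∈ T j) → ∀ i, xd t i ∈ X i) →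
      -- IR
      (∀ (t' : ∀ i, Fin (d i) → ℝ), (∀ j, t' j ∈ T j) → ∀ i : Fin n, ∀ ti ∈ T i,
        0 ≤ (∑ k, xd (Function.update t' i ti) i k * ti k)
            + c i (xd (Function.update t' i ti) i) - pd (Function.update t' i ti) i) →
      -- IC
      (∀ (t' : ∀ i, Fin (d i) → ℝ), (∀ j, t' j ∈ T j) → ∀ i : Fin n, ∀ ti ∈ T i,
        (∑ k, xd t' i k * ti k) + c i (xd t' i) - pd t' i ≤
        (∑ k, xd (Function.update t' i ti) i k * ti k)
            + c i (xd (Function.update t' i ti) i) - pd (Function.update t' i ti) i) →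
      ∃ pm : ∀ i : Fin n, (Fin (d i) → ℝ) →
          (∀ j : {j : Fin n // j ≠ i}, Fin (d j.1) → ℝ) → ℝ,
        (∀ (i : Fin n) (tmi : ∀ j : {j : Fin n // j ≠ i}, Fin (d j.1) → ℝ),
          (∀ j, tmi j ∈ T j.1) →
          ConvexOn ℝ (X i) (fun x => pm i x tmi - c i x)) ∧
        (∀ (i : Fin n) (tmi : ∀ j : {j : Fin n // j ≠ i}, Fin (d j.1) → ℝ),
          (∀ j, tmi j ∈ T j.1) → pm i 0 tmi ≤ 0) ∧
        (∀ t : ∀ i, Fin (d i) → ℝ, (∀ j, t j ∈ T j) → ∀ i : Fin n,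
          xd t i ∈ X i ∧
          (∀ x ∈ X i,
            (∑ k, x k * t i k) + c i x - pm i x (fun j => t j.1) ≤
            (∑ k, xd t i k * t i k) + c i (xd t i) - pm i (xd t i) (fun j => t j.1)) ∧
          pd t i = pm i (xd t i) (fun j => t j.1)))
    ∧
    -- (ii) each direct mechanism equivalent to a menu mechanism in 𝓜^{m,pn} is truthful
    (∀ (pm : ∀ i : Fin n, (Fin (d i) → ℝ) →
        (∀ j : {j : Fin n // j ≠ i}, Fin (d j.1) → ℝ) → ℝ),
      (∀ (i : Fin n) (tmi : ∀ j : {j : Fin n // j ≠ i}, Fin (d j.1) → ℝ),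
        (∀ j, tmi j ∈ T j.1) →
        ConvexOn ℝ (X i) (fun x => pm i x tmi - c i x)) →
      (∀ (i : Fin n) (tmi : ∀ j : {j : Fin n // j ≠ i}, Fin (d j.1) → ℝ),
        (∀ j, tmi j ∈ T j.1) → pm i 0 tmi ≤ 0) →
      ∀ (xd : (∀ i, Fin (d i) → ℝ) → ∀ i, Fin (d i) → ℝ)
        (pd : (∀ i, Fin (d i) → ℝ) → Fin n → ℝ),
        (∀ t : ∀ i, Fin (d i) → ℝ, (∀ j, t j ∈ T j) → ∀ i : Fin n,
          xd t i ∈ X i ∧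
          (∀ x ∈ X i,
            (∑ k, x k * t i k) + c i x - pm i x (fun j => t j.1) ≤
            (∑ k, xd t i k * t i k) + c i (xd t i) - pm i (xd t i) (fun j => t j.1)) ∧
          pd t i = pm i (xd t i) (fun j => t j.1)) →
        -- IR
        (∀ (t' : ∀ i, Fin (d i) → ℝ), (∀ j, t' j ∈ T j) → ∀ i : Fin n, ∀ ti ∈ T i,
          0 ≤ (∑ k, xd (Function.update t' i ti) i k * ti k)
              + c i (xd (Function.update t' i ti) i) - pd (Function.update t' i ti) i) ∧
        -- IC
        (∀ (t' : ∀ i, Fin (d i) → ℝ), (∀ j, t' j ∈ T j) → ∀ i : Fin n, ∀ ti ∈ T i,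
          (∑ k, xd t' i k * ti k) + c i (xd t' i) - pd t' i ≤
          (∑ k, xd (Function.update t' i ti) i k * ti k)
              + c i (xd (Function.update t' i ti) i) - pd (Function.update t' i ti) i)) := by
  classical
  constructor
  · -- part (i)
    intro xd pd hfeas hIR hIC
    have hU0 : ∀ (i : Fin n) (tmi : ∀ j : {j : Fin n // j ≠ i}, Fin (d j.1) → ℝ),
        (∀ j, tmi j ∈ T j.1) → ∀ s ∈ T i, 0 ≤ Uf xd pd c i tmi s := by
      intro i tmi htmi s hs
      obtain ⟨t0, ht0⟩ := hTne i
      have hmem := Pr_mem T htmi ht0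
      have h := hIR (Pr i tmi t0) hmem i s hs
      rw [Pr_update t0 s] at h
      simpa [Uf] using h
    have hB : ∀ (i : Fin n) (tmi : ∀ j : {j : Fin n // j ≠ i}, Fin (d j.1) → ℝ),
        (∀ j, tmi j ∈ T j.1) → ∀ x : Fin (d i) → ℝ,
        BddAbove ((fun s => (∑ k, x k * s k) - Uf xd pd c i tmi s) '' (T i)) :=
      fun i tmi htmi x => aux_bdd (T i) (hTcomp i) _ (hU0 i tmi htmi) x
    refine ⟨fun i x tmi => c i x + supS (T i) (Uf xd pd c i tmi) x, ?_, ?_, ?_⟩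
    · -- partial convexity
      intro i tmi htmi
      have h := aux_convexOn (X i) (hXconv i) (T i) (hTne i) _ (hB i tmi htmi)
      simpa only [add_sub_cancel_left] using h
    · -- no-buy-no-pay
      intro i tmi htmi
      have h1 : supS (T i) (Uf xd pd c i tmi) 0 ≤ 0 := by
        refine csSup_le ((hTne i).image _) ?_
        rintro _ ⟨s, hs, rfl⟩
        beta_reduce
        simp only [Pi.zero_apply, zero_mul, Finset.sum_const_zero, zero_sub, neg_nonpos]
        exact hU0 i tmi htmi s hs
      beta_reduce
      rw [hc0 i]
      linarith
    · -- equivalence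
      intro t ht i
      have htmi : ∀ j : {j : Fin n // j ≠ i}, (fun j : {j : Fin n // j ≠ i} => t j.1) j ∈ T j.1 :=
        fun j => ht j.1
      have hPr : ∀ s : Fin (d i) → ℝ, Pr i (fun j : {j : Fin n // j ≠ i} => t j.1) s
          = Function.update t i s := fun s => Pr_eq_update t s
      have hUt : Uf xd pd c i (fun j : {j : Fin n // j ≠ i} => t j.1) (t i)
          = (∑ k, xd t i k * t i k) + c i (xd t i) - pd t i := by
        simp [Uf, hPr, Function.update_eq_self]
      have hsup : supS (T i) (Uf xd pd c i (fun j : {j : Fin n // j ≠ i} => t j.1)) (xd t i)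
          = pd t i - c i (xd t i) := by
        apply le_antisymm
        · refine csSup_le ((hTne i).image _) ?_
          rintro _ ⟨s, hs, rfl⟩
          have hic := hIC t ht i s hs
          rw [← hPr s] at hic
          beta_reduce
          simp only [Uf] at hic ⊢
          linarith
        · refine le_csSup (hB i _ htmi (xd t i)) ⟨t i, ht i, ?_⟩
          beta_reduce
          rw [hUt]; ring
      refine ⟨hfeas t ht i, ?_, ?_⟩
      · intro x hx
        have h1 : (∑ k, x k * t i k) - Uf xd pd c i (fun j : {j : Fin n // j ≠ i} => t j.1) (t i)
            ≤ supS (T i) (Uf xd pd c i (fun j : {j : Fin n // j ≠ i} => t j.1)) x :=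
          le_csSup (hB i _ htmi x) ⟨t i, ht i, rfl⟩
        rw [hUt] at h1
        beta_reduce
        rw [hsup]
        linarith
      · beta_reduce
        rw [hsup]
        ring
  · -- part (ii)
    intro pm hconv hnbnp xd pd heq
    have hupdmem : ∀ (t' : ∀ i, Fin (d i) → ℝ), (∀ j, t' j ∈ T j) →
        ∀ (i : Fin n) (ti : Fin (d i) → ℝ), ti ∈ T i →
        ∀ j, Function.update t' i ti j ∈ T j := by
      intro t' ht' i ti hti j
      rcases eq_or_ne j i with rfl | hj
      · simpa using hti
      · rw [Function.update_of_ne hj]; exact ht' j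
    constructor
    · -- IR
      intro t' ht' i ti hti
      have ht := hupdmem t' ht' i ti hti
      obtain ⟨hx, hmax, hp⟩ := heq (Function.update t' i ti) ht i
      have h0 := hmax 0 (hX0 i)
      have hn := hnbnp i (fun j => Function.update t' i ti j.1) (fun j => ht j.1)
      have hupd : Function.update t' i ti i = ti := Function.update_self i ti t'
      rw [hp]
      rw [hupd] at h0
      simp only [Pi.zero_apply, zero_mul, Finset.sum_const_zero, hc0 i] at h0
      linarith
    · -- IC
      intro t' ht' i ti hti
      have ht := hupdmem t' ht' i ti hti
      obtain ⟨hx', hmax', hp'⟩ := heq t' ht' i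
      obtain ⟨hx, hmax, hp⟩ := heq (Function.update t' i ti) ht i
      have key := hmax (xd t' i) hx'
      have hfun : (fun j : {j : Fin n // j ≠ i} => Function.update t' i ti j.1)
          = (fun j : {j : Fin n // j ≠ i} => t' j.1) := by
        funext j; exact Function.update_of_ne j.2 ti t'
      have hupd : Function.update t' i ti i = ti := Function.update_self i ti t'
      rw [hfun, hupd] at key
      rw [hp, hp', hfun]
      exact key
end

section
/- (Pricing rules of TEDI form yield truthful mechanisms.) For each player i let f_i : 𝒳_i × 𝒯_{-i} → ℝ be a function such that x_i ↦ f_i(x_i; t_{-i}) is convex on 𝒳_i for every t_{-i}, and define the pricing rule p^m_i(x_i; t_{-i}) = c_i(x_i) + f_i(x_i; t_{-i}) − f_i(0; t_{-i}). Then every direct mechanism M^d that is equivalent to the menu mechanism M^m = {p^m_i} is truthful, i.e., satisfies both IC and IR. -/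
open Finset

/-- Pricing rules of TEDI form yield truthful mechanisms.
If each pricing rule has the form `pm i x tmi = c i x + f i x tmi - f i 0 tmi` with
`x ↦ f i x tmi` convex on `X i`, then every direct mechanism equivalent to the menu
mechanism `pm` is truthful (IC and IR). -/
theorem tedi_pricing_rules_truthful
    (n : ℕ) (d : Fin n → ℕ)
    (T X : ∀ i : Fin n, Set (Fin (d i) → ℝ))
    (hTne : ∀ i, (T i).Nonempty) (hTconv : ∀ i, Convex ℝ (T i))
    (hTcomp : ∀ i, IsCompact (T i))
    (hXne : ∀ i, (X i).Nonempty) (hXconv : ∀ i, Convex ℝ (X i))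
    (hXcomp : ∀ i, IsCompact (X i))
    (hX0 : ∀ i, (0 : Fin (d i) → ℝ) ∈ X i)
    (c : ∀ i : Fin n, (Fin (d i) → ℝ) → ℝ)
    (hc : ∀ i, ContinuousOn (c i) (X i))
    (hc0 : ∀ i, c i (0 : Fin (d i) → ℝ) = 0)
    -- the functions fᵢ, convex in the outcome variable
    (f : ∀ i : Fin n, (Fin (d i) → ℝ) →
      (∀ j : {j : Fin n // j ≠ i}, Fin (d j.1) → ℝ) → ℝ)
    (hf : ∀ (i : Fin n) (tmi : ∀ j : {j : Fin n // j ≠ i}, Fin (d j.1) → ℝ),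
      (∀ j, tmi j ∈ T j.1) → ConvexOn ℝ (X i) (fun x => f i x tmi))
    -- the TEDI pricing rules
    (pm : ∀ i : Fin n, (Fin (d i) → ℝ) →
      (∀ j : {j : Fin n // j ≠ i}, Fin (d j.1) → ℝ) → ℝ)
    (hpm : ∀ (i : Fin n) (x : Fin (d i) → ℝ)
      (tmi : ∀ j : {j : Fin n // j ≠ i}, Fin (d j.1) → ℝ),
      pm i x tmi = c i x + f i x tmi - f i 0 tmi)
    -- an equivalent direct mechanism
    (xd : (∀ i, Fin (d i) → ℝ) → ∀ i, Fin (d i) → ℝ)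
    (pd : (∀ i, Fin (d i) → ℝ) → Fin n → ℝ)
    (hequiv : ∀ t : ∀ i, Fin (d i) → ℝ, (∀ j, t j ∈ T j) → ∀ i : Fin n,
      xd t i ∈ X i ∧
      (∀ x ∈ X i,
        (∑ k, x k * t i k) + c i x - pm i x (fun j => t j.1) ≤
        (∑ k, xd t i k * t i k) + c i (xd t i) - pm i (xd t i) (fun j => t j.1)) ∧
      pd t i = pm i (xd t i) (fun j => t j.1)) :
    -- IR
    (∀ (t' : ∀ i, Fin (d i) → ℝ), (∀ j, t' j ∈ T j) → ∀ i : Fin n, ∀ ti ∈ T i,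
      0 ≤ (∑ k, xd (Function.update t' i ti) i k * ti k)
          + c i (xd (Function.update t' i ti) i) - pd (Function.update t' i ti) i) ∧
    -- IC
    (∀ (t' : ∀ i, Fin (d i) → ℝ), (∀ j, t' j ∈ T j) → ∀ i : Fin n, ∀ ti ∈ T i,
      (∑ k, xd t' i k * ti k) + c i (xd t' i) - pd t' i ≤
      (∑ k, xd (Function.update t' i ti) i k * ti k)
          + c i (xd (Function.update t' i ti) i) - pd (Function.update t' i ti) i) := by
  
  have key : ∀ (t' : ∀ i, Fin (d i) → ℝ), (∀ j, t' j ∈ T j) → ∀ i : Fin n, ∀ ti ∈ T i,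
      ∀ x ∈ X i,
      (∑ k, x k * ti k) + c i x - pm i x (fun j : {j : Fin n // j ≠ i} => t' j.1) ≤
      (∑ k, xd (Function.update t' i ti) i k * ti k)
          + c i (xd (Function.update t' i ti) i) - pd (Function.update t' i ti) i := by
    intro t' ht' i ti hti x hx
    set t := Function.update t' i ti with hts
    have ht : ∀ j, t j ∈ T j := by
      intro j
      by_cases h : j = i
      · subst h; simpa [hts] using hti
      · simpa [hts, Function.update_of_ne h] using ht' j
    obtain ⟨hxd, hmax, hpd⟩ := hequiv t ht i
    have hti' : t i = ti := by simp [hts]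
    have htmi : (fun j : {j : Fin n // j ≠ i} => t j.1)
        = fun j : {j : Fin n // j ≠ i} => t' j.1 := by
      funext j
      exact Function.update_of_ne j.2 _ _
    have := hmax x hx
    rw [hpd, ← hti', ← htmi]
    exact this
  constructor
  · intro t' ht' i ti hti
    have h0 := key t' ht' i ti hti 0 (hX0 i)
    have hz : (∑ k, (0 : Fin (d i) → ℝ) k * ti k) + c i 0
        - pm i 0 (fun j : {j : Fin n // j ≠ i} => t' j.1) = 0 := by
      simp [hpm, hc0 i]
    linarith [h0, hz.ge.trans h0]
  · intro t' ht' i ti hti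
    obtain ⟨hxd', _, hpd'⟩ := hequiv t' ht' i
    have := key t' ht' i ti hti (xd t' i) hxd'
    rw [hpd']
    exact this
end

section
/- Let u_1, u_2 be convex real-valued functions on X = [x̲, x̄] (with x̲ < x̄), let T = [t̲, t̄] (with t̲ < t̄), and for j = 1, 2 let x_j : T → X be a Lebesgue-measurable selection with x_j(t) ∈ argmax_{x ∈ X} (x·t − u_j(x)) for every t ∈ T. If sup_{x ∈ X} |u_1(x) − u_2(x)| ≤ δ for some δ > 0, then ∫_{t̲}^{t̄} |x_1(t) − x_2(t)| dt ≤ √(2δ) · ((x̄ − x̲) + (t̄ − t̲)) / 2. -/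
/-!
The value function `φⱼ t = xⱼ t * t - uⱼ (xⱼ t)` (the conjugate of `uⱼ`) has `xⱼ` as a
subgradient, so `xⱼ` is monotone and `∫_τ^b xⱼ = φⱼ b - φⱼ τ`. Thus `h = x₁ - x₂` has tail
integrals `D b - D τ` with `D = φ₁ - φ₂`, and `|D| ≤ δ`; a layer-cake argument (Abel summation)
then bounds `∫ P h` up to boundary terms by `δ` times the variation of a monotone `P`. For the
clipped `G = max (x₁ - m) (min x₂ (x₁ + m))` this gives `|∫ (x₁ - G) h| ≤ 2δ (xu - xl)`, while
pointwise `|h| ≤ (x₁ - G) h / m + m / 4`; the choice `m = 2√(2δ)` balances the two terms.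
-/

open MeasureTheory Set Filter Topology Asymptotics

section Subgradient

variable {f φ : ℝ → ℝ}

lemma monotoneOn_of_subgradient {s : Set ℝ}
    (hφ : ∀ y ∈ s, ∀ z ∈ s, f z * (y - z) ≤ φ y - φ z) : MonotoneOn f s := by
  intro z hz y hy hzy
  have h1 := hφ y hy z hz
  have h2 := hφ z hz y hy
  rcases hzy.eq_or_lt with rfl | hlt
  · rfl
  · nlinarith

lemma hasDerivAt_of_subgradient {s : Set ℝ} {t : ℝ}
    (hφ : ∀ y ∈ s, ∀ z ∈ s, f z * (y - z) ≤ φ y - φ z) (hs : s ∈ 𝓝 t) (hf : ContinuousAt f t) :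
    HasDerivAt φ (f t) t := by
  have hbound : (fun y => φ y - φ t - (y - t) • f t) =O[𝓝 t] fun y => (f y - f t) * (y - t) := by
    refine IsBigO.of_bound 1 ?_
    filter_upwards [hs] with y hy
    have h1 := hφ y hy t (mem_of_mem_nhds hs)
    have h2 := hφ t (mem_of_mem_nhds hs) y hy
    rw [one_mul, Real.norm_eq_abs, Real.norm_eq_abs, smul_eq_mul]
    exact abs_le_abs_of_nonneg (by linarith) (by linarith)
  have hsmall : (fun y => f y - f t) =o[𝓝 t] fun _ => (1 : ℝ) :=
    (isLittleO_one_iff ℝ).mpr (by simpa using hf.sub_const (f t))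
  rw [hasDerivAt_iff_isLittleO]
  simpa using hbound.trans_isLittleO (hsmall.mul_isBigO (isBigO_refl (fun y => y - t) _))

lemma continuousOn_of_subgradient {a b : ℝ}
    (hφ : ∀ y ∈ Icc a b, ∀ z ∈ Icc a b, f z * (y - z) ≤ φ y - φ z) :
    ContinuousOn φ (Icc a b) := by
  set K := |f a| + |f b|
  have hmono := monotoneOn_of_subgradient hφ
  have hfK : ∀ y ∈ Icc a b, |f y| ≤ K := fun y hy => by
    have := hmono (left_mem_Icc.2 (hy.1.trans hy.2)) hy hy.1
    have := hmono hy (right_mem_Icc.2 (hy.1.trans hy.2)) hy.2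
    rw [abs_le]
    constructor <;>
      linarith [neg_abs_le (f a), le_abs_self (f b), abs_nonneg (f a), abs_nonneg (f b)]
  refine (LipschitzOnWith.of_dist_le_mul (K := K.toNNReal) fun y hy z hz => ?_).continuousOn
  have hy' : |f y * (y - z)| ≤ K * |y - z| := by
    rw [abs_mul]; exact mul_le_mul_of_nonneg_right (hfK y hy) (abs_nonneg _)
  have hz' : |f z * (y - z)| ≤ K * |y - z| := by
    rw [abs_mul]; exact mul_le_mul_of_nonneg_right (hfK z hz) (abs_nonneg _)
  rw [Real.dist_eq, Real.dist_eq, Real.coe_toNNReal K (by positivity), abs_le]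
  constructor <;>
    linarith [neg_abs_le (f z * (y - z)), le_abs_self (f y * (y - z)), hφ y hy z hz, hφ z hz y hy]

theorem setIntegral_Icc_eq_sub_of_subgradient {a b : ℝ} (hab : a ≤ b)
    (hφ : ∀ y ∈ Icc a b, ∀ z ∈ Icc a b, f z * (y - z) ≤ φ y - φ z) :
    ∫ t in Icc a b, f t = φ b - φ a := by
  have hmono := monotoneOn_of_subgradient hφ
  rw [integral_Icc_eq_integral_Ioc, ← intervalIntegral.integral_of_le hab]
  refine integral_eq_of_hasDerivAt_off_countable_of_le φ f hab
    hmono.countable_not_continuousWithinAt (continuousOn_of_subgradient hφ) (fun t ht => ?_)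
    ((uIcc_of_le hab ▸ hmono).intervalIntegrable)
  have hnhds : Icc a b ∈ 𝓝 t := Icc_mem_nhds ht.1.1 ht.1.2
  have hcont : ContinuousWithinAt f (Icc a b) t := by
    by_contra h
    exact ht.2 ⟨Ioo_subset_Icc_self ht.1, h⟩
  exact hasDerivAt_of_subgradient hφ hnhds (hcont.continuousAt hnhds)

end Subgradient

lemma exists_Icc_ae_eq_of_upwardClosed {a b : ℝ} (hab : a ≤ b) {U : Set ℝ} (hU : U ⊆ Icc a b)
    (hup : ∀ t ∈ U, ∀ y ∈ Icc a b, t ≤ y → y ∈ U) : ∃ τ ∈ Icc a b, U =ᵐ[volume] Icc τ b := by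
  rcases U.eq_empty_or_nonempty with rfl | hne
  · exact ⟨b, right_mem_Icc.2 hab, (ae_eq_empty.mpr (by simp)).symm⟩
  have hbdd : BddBelow U := ⟨a, fun t ht => (hU ht).1⟩
  obtain ⟨t₀, ht₀⟩ := hne
  refine ⟨sInf U, ⟨le_csInf ⟨t₀, ht₀⟩ fun t ht => (hU ht).1, (csInf_le hbdd ht₀).trans (hU ht₀).2⟩,
    ?_⟩
  have hsub : U ⊆ Icc (sInf U) b := fun t ht => ⟨csInf_le hbdd ht, (hU ht).2⟩
  have hsup : Ioc (sInf U) b ⊆ U := fun y hy => by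
    obtain ⟨t, ht, hty⟩ := exists_lt_of_csInf_lt ⟨t₀, ht₀⟩ hy.1
    exact hup t ht y ⟨(hU ht).1.trans hty.le, hy.2⟩ hty.le
  exact hsub.eventuallyLE.antisymm (Ioc_ae_eq_Icc.symm.le.trans hsup.eventuallyLE)

theorem abs_setIntegral_sub_mul_sub_le {a b δ : ℝ} {P h D : ℝ → ℝ} (hab : a ≤ b)
    (hP : MonotoneOn P (Icc a b)) (hPm : Measurable P) (hh : IntegrableOn h (Icc a b))
    (hD : ∀ τ ∈ Icc a b, ∫ t in Icc τ b, h t = D b - D τ) (hDδ : ∀ t ∈ Icc a b, |D t| ≤ δ) :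
    |(∫ t in Icc a b, (P t - P a) * h t) - (P b - P a) * D b| ≤ δ * (P b - P a) := by
  have ha : a ∈ Icc a b := left_mem_Icc.2 hab
  have hb : b ∈ Icc a b := right_mem_Icc.2 hab
  have hPab : P a ≤ P b := hP ha hb hab
  set S := Ioo (P a) (P b)
  have hvolS : volume.real S = P b - P a := by
    rw [measureReal_def, Real.volume_Ioo, ENNReal.toReal_ofReal (by linarith)]
  -- `P t - P a` is the length of the layer `{y ∈ S | y < P t}`
  set F : ℝ → ℝ → ℝ := fun t y => {q : ℝ × ℝ | q.2 < P q.1}.indicator (fun q => h q.1) (t, y)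
  have hF :
      Integrable (Function.uncurry F) ((volume.restrict (Icc a b)).prod (volume.restrict S)) :=
    (hh.comp_fst _).indicator (measurableSet_lt measurable_snd (hPm.comp measurable_fst))
  have hlayer : ∀ t ∈ Icc a b, ∫ y in S, F t y = (P t - P a) * h t := fun t ht => by
    have : ∀ y, F t y = (Iio (P t)).indicator (fun _ => h t) y := fun y => rfl
    simp_rw [this]
    rw [setIntegral_indicator measurableSet_Iio, setIntegral_const, Ioo_inter_Iio,
      min_eq_right (hP ht hb ht.2), measureReal_def, Real.volume_Ioo, smul_eq_mul,
      ENNReal.toReal_ofReal (by linarith [hP ha ht ht.1])]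
  have hsection : ∀ y ∈ S, |(∫ t in Icc a b, F t y) - D b| ≤ δ := fun y _ => by
    have : ∀ t, F t y = {t | y < P t}.indicator h t := fun t => rfl
    simp_rw [this]
    rw [setIntegral_indicator (measurableSet_lt measurable_const hPm)]
    obtain ⟨τ, hτ, hae⟩ := exists_Icc_ae_eq_of_upwardClosed (U := Icc a b ∩ {t | y < P t}) hab
      inter_subset_left fun t ht s hs hts => ⟨hs, lt_of_lt_of_le ht.2 (hP ht.1 hs hts)⟩
    rw [setIntegral_congr_set hae, hD τ hτ, sub_sub_cancel_left, abs_neg]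
    exact hDδ τ hτ
  have hI : Integrable (fun y => ∫ t in Icc a b, F t y) (volume.restrict S) :=
    hF.integral_prod_right
  calc |(∫ t in Icc a b, (P t - P a) * h t) - (P b - P a) * D b|
      = |∫ y in S, ((∫ t in Icc a b, F t y) - D b)| := by
        rw [← setIntegral_congr_fun measurableSet_Icc hlayer, integral_integral_swap hF,
          integral_sub hI (integrable_const _), setIntegral_const, hvolS, smul_eq_mul]
    _ ≤ δ * volume.real S :=
        norm_setIntegral_le_of_norm_le_const (f := fun y => (∫ t in Icc a b, F t y) - D b)
          measure_Ioo_lt_top hsection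
    _ = δ * (P b - P a) := by rw [hvolS]

lemma integrableOn_mul_of_mem_Icc {a b xl xu : ℝ} {P h : ℝ → ℝ} (hPm : Measurable P)
    (hPX : ∀ t ∈ Icc a b, P t ∈ Icc xl xu) (hh : IntegrableOn h (Icc a b)) :
    IntegrableOn (fun t => P t * h t) (Icc a b) := by
  refine hh.bdd_mul (c := |xl| + |xu|) hPm.aestronglyMeasurable ?_
  filter_upwards [ae_restrict_mem measurableSet_Icc] with t ht
  rw [Real.norm_eq_abs, abs_le]
  constructor <;> linarith [(hPX t ht).1, (hPX t ht).2, neg_abs_le xl, le_abs_self xu,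
    abs_nonneg xl, abs_nonneg xu]

theorem abs_setIntegral_sub_mul_le {a b xl xu δ : ℝ} {P Q h D : ℝ → ℝ} (hab : a ≤ b)
    (hP : MonotoneOn P (Icc a b)) (hQ : MonotoneOn Q (Icc a b))
    (hPm : Measurable P) (hQm : Measurable Q)
    (hPX : ∀ t ∈ Icc a b, P t ∈ Icc xl xu) (hQX : ∀ t ∈ Icc a b, Q t ∈ Icc xl xu)
    (hh : IntegrableOn h (Icc a b))
    (hD : ∀ τ ∈ Icc a b, ∫ t in Icc τ b, h t = D b - D τ) (hDδ : ∀ t ∈ Icc a b, |D t| ≤ δ) :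
    |∫ t in Icc a b, (P t - Q t) * h t| ≤ 2 * δ * (xu - xl) := by
  have ha : a ∈ Icc a b := left_mem_Icc.2 hab
  have hb : b ∈ Icc a b := right_mem_Icc.2 hab
  have hEP := abs_setIntegral_sub_mul_sub_le hab hP hPm hh hD hDδ
  have hEQ := abs_setIntegral_sub_mul_sub_le hab hQ hQm hh hD hDδ
  have hsplit : ∫ t in Icc a b, (P t - Q t) * h t =
      ((∫ t in Icc a b, (P t - P a) * h t) - (P b - P a) * D b)
        - ((∫ t in Icc a b, (Q t - Q a) * h t) - (Q b - Q a) * D b)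
        + ((P b - Q b) * D b - (P a - Q a) * D a) := by
    have hPint := integrableOn_mul_of_mem_Icc hPm hPX hh
    have hQint := integrableOn_mul_of_mem_Icc hQm hQX hh
    simp only [sub_mul]
    rw [integral_sub hPint hQint, integral_sub hPint (hh.const_mul _),
      integral_sub hQint (hh.const_mul _), integral_const_mul, integral_const_mul, hD a ha]
    ring
  have hbudget : (P b - P a) + (Q b - Q a) + |P b - Q b| + |P a - Q a| ≤ 2 * (xu - xl) := by
    have := hPX a ha; have := hPX b hb; have := hQX a ha; have := hQX b hb
    simp only [mem_Icc] at *
    rcases abs_cases (P b - Q b) with ⟨h1, _⟩ | ⟨h1, _⟩ <;>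
      rcases abs_cases (P a - Q a) with ⟨h2, _⟩ | ⟨h2, _⟩ <;> linarith
  have hδ : 0 ≤ δ := (abs_nonneg _).trans (hDδ a ha)
  have hb' : |(P b - Q b) * D b| ≤ |P b - Q b| * δ := by
    rw [abs_mul]; exact mul_le_mul_of_nonneg_left (hDδ b hb) (abs_nonneg _)
  have ha' : |(P a - Q a) * D a| ≤ |P a - Q a| * δ := by
    rw [abs_mul]; exact mul_le_mul_of_nonneg_left (hDδ a ha) (abs_nonneg _)
  rw [hsplit]
  refine (abs_add_le _ _).trans ((add_le_add ((abs_sub _ _).trans (add_le_add hEP hEQ))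
    ((abs_sub _ _).trans (add_le_add hb' ha'))).trans ?_)
  nlinarith

lemma abs_sub_le_clip_mul_div_add {x y m : ℝ} (hm : 0 < m) :
    |x - y| ≤ (x - max (x - m) (min y (x + m))) * (x - y) / m + m / 4 := by
  rw [div_add' _ _ _ hm.ne', le_div_iff₀ hm]
  rcases le_total m (x - y) with hc | hc
  · rw [max_eq_left (by linarith [min_le_left y (x + m)]), abs_of_nonneg (by linarith)]
    nlinarith
  rcases le_total (x - y) (-m) with hc' | hc'
  · rw [min_eq_right (by linarith : x + m ≤ y), max_eq_right (by linarith),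
      abs_of_nonpos (by linarith)]
    nlinarith
  · rw [min_eq_left (by linarith : y ≤ x + m), max_eq_right (by linarith)]
    nlinarith [sq_abs (x - y), sq_nonneg (|x - y| - m / 2)]

theorem integral_abs_sub_le_of_primitives_close {a b xl xu δ : ℝ} {x₁ x₂ D : ℝ → ℝ}
    (hab : a ≤ b) (hδ : 0 < δ) (hm₁ : Measurable x₁) (hm₂ : Measurable x₂)
    (hmono₁ : MonotoneOn x₁ (Icc a b)) (hmono₂ : MonotoneOn x₂ (Icc a b))
    (hX₁ : ∀ t ∈ Icc a b, x₁ t ∈ Icc xl xu) (hX₂ : ∀ t ∈ Icc a b, x₂ t ∈ Icc xl xu)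
    (hD : ∀ τ ∈ Icc a b, ∫ t in Icc τ b, (x₁ t - x₂ t) = D b - D τ)
    (hDδ : ∀ t ∈ Icc a b, |D t| ≤ δ) :
    ∫ t in Icc a b, |x₁ t - x₂ t| ≤ √(2 * δ) * ((xu - xl) + (b - a)) / 2 := by
  -- the optimal clipping width balances `2δ(xu - xl)/m` against `m(b - a)/4`
  set s := √(2 * δ)
  have hsq : s ^ 2 = 2 * δ := Real.sq_sqrt (by positivity)
  set m := 2 * s
  have hm : 0 < m := by positivity
  set G : ℝ → ℝ := fun t => max (x₁ t - m) (min (x₂ t) (x₁ t + m))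
  have hGm : Measurable G := (hm₁.sub_const m).max (hm₂.min (hm₁.add_const m))
  have hGmono : MonotoneOn G (Icc a b) := fun t₁ ht₁ t₂ ht₂ h₁₂ =>
    max_le_max (by linarith [hmono₁ ht₁ ht₂ h₁₂])
      (min_le_min (hmono₂ ht₁ ht₂ h₁₂) (by linarith [hmono₁ ht₁ ht₂ h₁₂]))
  have hGX : ∀ t ∈ Icc a b, G t ∈ Icc xl xu := fun t ht => by
    obtain ⟨h₁, h₁'⟩ := hX₁ t ht
    obtain ⟨h₂, h₂'⟩ := hX₂ t ht
    exact ⟨le_max_of_le_right (le_min h₂ (by linarith)),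
      max_le (by linarith) ((min_le_left _ _).trans h₂')⟩
  have hh : IntegrableOn (fun t => x₁ t - x₂ t) (Icc a b) :=
    (hmono₁.integrableOn_isCompact isCompact_Icc).sub (hmono₂.integrableOn_isCompact isCompact_Icc)
  have hclip : IntegrableOn (fun t => (x₁ t - G t) * (x₁ t - x₂ t)) (Icc a b) :=
    (integrableOn_mul_of_mem_Icc hm₁ hX₁ hh).sub (integrableOn_mul_of_mem_Icc hGm hGX hh)
      |>.congr_fun (fun t _ => by simp only [Pi.sub_apply, sub_mul]) measurableSet_Icc
  have hvol : volume.real (Icc a b) = b - a := by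
    rw [measureReal_def, Real.volume_Icc, ENNReal.toReal_ofReal (by linarith)]
  calc ∫ t in Icc a b, |x₁ t - x₂ t|
      ≤ ∫ t in Icc a b, ((x₁ t - G t) * (x₁ t - x₂ t) / m + m / 4) :=
        setIntegral_mono_on hh.abs ((hclip.div_const m).add (integrable_const _))
          measurableSet_Icc fun t _ => abs_sub_le_clip_mul_div_add hm
    _ = (∫ t in Icc a b, (x₁ t - G t) * (x₁ t - x₂ t)) / m + m / 4 * (b - a) := by
        rw [integral_add (hclip.div_const m) (integrable_const _), integral_div,
          setIntegral_const, hvol, smul_eq_mul, mul_comm]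
    _ ≤ 2 * δ * (xu - xl) / m + m / 4 * (b - a) := by
        gcongr
        exact (le_abs_self _).trans
          (abs_setIntegral_sub_mul_le hab hmono₁ hGmono hm₁ hGm hX₁ hGX hh hD hDδ)
    _ = s * ((xu - xl) + (b - a)) / 2 := by
        rw [← hsq]
        field_simp
        ring

section Argmax

variable {X T : Set ℝ} {u x : ℝ → ℝ}

lemma subgradient_of_argmax (hsel : ∀ t ∈ T, x t ∈ X ∧ ∀ y ∈ X, y * t - u y ≤ x t * t - u (x t)) :
    ∀ s ∈ T, ∀ t ∈ T, x t * (s - t) ≤ (x s * s - u (x s)) - (x t * t - u (x t)) :=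
  fun s hs t ht => by linarith [(hsel s hs).2 (x t) (hsel t ht).1]

lemma abs_argmax_value_sub_le {u₁ u₂ x₁ x₂ : ℝ → ℝ} {δ : ℝ}
    (hsel₁ : ∀ t ∈ T, x₁ t ∈ X ∧ ∀ y ∈ X, y * t - u₁ y ≤ x₁ t * t - u₁ (x₁ t))
    (hsel₂ : ∀ t ∈ T, x₂ t ∈ X ∧ ∀ y ∈ X, y * t - u₂ y ≤ x₂ t * t - u₂ (x₂ t))
    (hclose : ∀ y ∈ X, |u₁ y - u₂ y| ≤ δ) :
    ∀ t ∈ T, |(x₁ t * t - u₁ (x₁ t)) - (x₂ t * t - u₂ (x₂ t))| ≤ δ := fun t ht => by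
  obtain ⟨hX₁, hmax₁⟩ := hsel₁ t ht
  obtain ⟨hX₂, hmax₂⟩ := hsel₂ t ht
  have h₁ := abs_le.1 (hclose _ hX₁)
  have h₂ := abs_le.1 (hclose _ hX₂)
  rw [abs_le]
  constructor <;> linarith [hmax₁ _ hX₂, hmax₂ _ hX₁]

end Argmax

theorem conjugate_selection_l1_bound_one_dim_general
    (xl xu tl tu δ : ℝ) (ht : tl < tu) (hδ : 0 < δ)
    (u1 u2 : ℝ → ℝ)
    (x1 x2 : ℝ → ℝ)
    (hm1 : Measurable x1) (hm2 : Measurable x2)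
    (hsel1 : ∀ t ∈ Set.Icc tl tu, x1 t ∈ Set.Icc xl xu ∧
      ∀ x ∈ Set.Icc xl xu, x * t - u1 x ≤ x1 t * t - u1 (x1 t))
    (hsel2 : ∀ t ∈ Set.Icc tl tu, x2 t ∈ Set.Icc xl xu ∧
      ∀ x ∈ Set.Icc xl xu, x * t - u2 x ≤ x2 t * t - u2 (x2 t))
    (hclose : ∀ x ∈ Set.Icc xl xu, |u1 x - u2 x| ≤ δ) :
    ∫ t in Set.Icc tl tu, |x1 t - x2 t| ≤
      Real.sqrt (2 * δ) * ((xu - xl) + (tu - tl)) / 2 := by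
  have hsub1 := subgradient_of_argmax hsel1
  have hsub2 := subgradient_of_argmax hsel2
  have hmono1 := monotoneOn_of_subgradient hsub1
  have hmono2 := monotoneOn_of_subgradient hsub2
  refine integral_abs_sub_le_of_primitives_close ht.le hδ hm1 hm2 hmono1 hmono2
    (fun t ht => (hsel1 t ht).1) (fun t ht => (hsel2 t ht).1) (fun τ hτ => ?_)
    (abs_argmax_value_sub_le hsel1 hsel2 hclose)
  have hτT : Icc τ tu ⊆ Icc tl tu := Icc_subset_Icc_left hτ.1
  rw [integral_sub ((hmono1.mono hτT).integrableOn_isCompact isCompact_Icc)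
      ((hmono2.mono hτT).integrableOn_isCompact isCompact_Icc),
    setIntegral_Icc_eq_sub_of_subgradient hτ.2 fun y hy z hz => hsub1 y (hτT hy) z (hτT hz),
    setIntegral_Icc_eq_sub_of_subgradient hτ.2 fun y hy z hz => hsub2 y (hτT hy) z (hτT hz)]
  ring

/-- One-dimensional conjugate stability.
If `u₁, u₂` are convex on `X = [xl, xu]`, `x₁, x₂` are measurable argmax selections of
`x ↦ x·t − uⱼ(x)` over `X` for `t ∈ T = [tl, tu]`, and `sup_{x ∈ X} |u₁ x − u₂ x| ≤ δ`,
then `∫_T |x₁(t) − x₂(t)| dt ≤ √(2δ)·((xu − xl) + (tu − tl))/2`. -/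
theorem conjugate_selection_l1_bound_one_dim
    (xl xu tl tu δ : ℝ) (hx : xl < xu) (ht : tl < tu) (hδ : 0 < δ)
    (u1 u2 : ℝ → ℝ)
    (hu1 : ConvexOn ℝ (Set.Icc xl xu) u1)
    (hu2 : ConvexOn ℝ (Set.Icc xl xu) u2)
    (x1 x2 : ℝ → ℝ)
    (hm1 : Measurable x1) (hm2 : Measurable x2)
    (hsel1 : ∀ t ∈ Set.Icc tl tu, x1 t ∈ Set.Icc xl xu ∧
      ∀ x ∈ Set.Icc xl xu, x * t - u1 x ≤ x1 t * t - u1 (x1 t))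
    (hsel2 : ∀ t ∈ Set.Icc tl tu, x2 t ∈ Set.Icc xl xu ∧
      ∀ x ∈ Set.Icc xl xu, x * t - u2 x ≤ x2 t * t - u2 (x2 t))
    (hclose : ∀ x ∈ Set.Icc xl xu, |u1 x - u2 x| ≤ δ) :
    ∫ t in Set.Icc tl tu, |x1 t - x2 t| ≤
      Real.sqrt (2 * δ) * ((xu - xl) + (tu - tl)) / 2 :=
  conjugate_selection_l1_bound_one_dim_general xl xu tl tu δ ht hδ u1 u2 x1 x2 hm1 hm2 hsel1 hsel2
    hclose
end

section
/- Let X = ∏_{i=1}^n [x̲_i, x̄_i] and T = ∏_{i=1}^n [t̲_i, t̄_i] with x̲_i < x̄_i and t̲_i < t̄_i for each i, let u_1, u_2 be convex real-valued functions on X, and for j = 1, 2 let x_j : T → X be a Lebesgue-measurable selection with x_j(t) ∈ argmax_{x ∈ X} (⟨x, t⟩ − u_j(x)) for every t ∈ T. If sup_{x ∈ X} |u_1(x) − u_2(x)| ≤ δ for some δ > 0, then ∫_T ‖x_1(t) − x_2(t)‖₁ dt ≤ √(2δ) · ( Σ_{i=1}^n (x̄_i − x̲_i)/(t̄_i − t̲_i)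 + n ) · ∏_{i=1}^n (t̄_i − t̲_i) / 2. -/
/-!
Let `φⱼ(t) = ⟨xⱼ(t), t⟩ - uⱼ(xⱼ(t))` (`conjugateValue`), the conjugate of `uⱼ`. Optimality of
`xⱼ` makes `xⱼ(t)` a subgradient of `φⱼ` at `t`, and `|φ₁ - φ₂| ≤ δ` on `T`. On every line
parallel to the `i`-th axis, `gⱼ = (xⱼ)ᵢ` is therefore monotone and `φⱼ` is a primitive of it.
Write `g₁ - g₂ = ∫ (1[y < g₁] - 1[y < g₂]) dy` and swap the integrals: the superlevel sets of a
monotone `gⱼ` are intervals `(s, b)`, on which `g₁ - g₂` integrates to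
`(φ₁ - φ₂)(b) - (φ₁ - φ₂)(s) ∈ [-δ, δ]`, so `∫ (g₁ - g₂)² ≤ 2δ (x̄ᵢ - x̲ᵢ)`. The pointwise bound
`|g₁ - g₂| ≤ ((g₁ - g₂)² + 2δ) / (2√(2δ))` turns this into the `L¹` bound on the line;
integrating over the remaining coordinates and summing over `i` gives the theorem.
-/

open MeasureTheory Set Filter Topology

section Subgradient

variable {I : Set ℝ} {g φ : ℝ → ℝ}

theorem monotoneOn_of_subgradient_s7 (h : ∀ s ∈ I, ∀ t ∈ I, g s * (t - s) ≤ φ t - φ s) :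
    MonotoneOn g I := by
  intro s hs t ht hst
  rcases hst.eq_or_lt with rfl | hlt
  · rfl
  · have := h s hs t ht
    have := h t ht s hs
    nlinarith

theorem lipschitzOnWith_of_subgradient {K : ℝ} (hK : ∀ s ∈ I, |g s| ≤ K)
    (h : ∀ s ∈ I, ∀ t ∈ I, g s * (t - s) ≤ φ t - φ s) :
    LipschitzOnWith K.toNNReal φ I :=
  LipschitzOnWith.of_le_add_mul' K fun s hs t ht => by
    have := h s hs t ht
    have : g s * (s - t) ≤ K * dist s t := by
      rw [Real.dist_eq]
      exact (le_abs_self _).trans (abs_mul (g s) (s - t) ▸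
        mul_le_mul_of_nonneg_right (hK s hs) (abs_nonneg _))
    linarith

theorem hasDerivAt_of_subgradient_s7 {x : ℝ} (hI : I ∈ 𝓝 x)
    (h : ∀ s ∈ I, ∀ t ∈ I, g s * (t - s) ≤ φ t - φ s) (hg : ContinuousAt g x) :
    HasDerivAt φ (g x) x := by
  have hx := mem_of_mem_nhds hI
  rw [hasDerivAt_iff_tendsto_slope, tendsto_iff_norm_sub_tendsto_zero]
  refine squeeze_zero_norm' ?_
    ((tendsto_iff_norm_sub_tendsto_zero.1 hg.tendsto).mono_left nhdsWithin_le_nhds)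
  filter_upwards [nhdsWithin_le_nhds hI, self_mem_nhdsWithin] with y hy hyx
  -- the slope of `φ` between `x` and `y` lies between `g x` and `g y`
  have h₁ := h x hx y hy
  have h₂ := h y hy x hx
  have hne : y - x ≠ 0 := sub_ne_zero.2 hyx
  simp only [Real.norm_eq_abs, abs_abs]
  rw [slope_def_field, div_sub' hne, abs_div, div_le_iff₀ (abs_pos.2 hne), ← abs_mul,
    abs_of_nonneg (by linarith)]
  exact (by linarith : _ ≤ (g y - g x) * (y - x)).trans (le_abs_self _)

theorem integral_eq_sub_of_subgradient {a b : ℝ} (hab : a ≤ b)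
    (h : ∀ s ∈ Icc a b, ∀ t ∈ Icc a b, g s * (t - s) ≤ φ t - φ s) :
    ∫ s in a..b, g s = φ b - φ a := by
  have hmono : MonotoneOn g (Icc a b) := monotoneOn_of_subgradient_s7 h
  have hbound : ∀ s ∈ Icc a b, |g s| ≤ |g a| + |g b| := fun s hs => by
    have := hmono ⟨le_rfl, hab⟩ hs hs.1
    have := hmono hs ⟨hab, le_rfl⟩ hs.2
    rw [abs_le]
    constructor <;> linarith [neg_abs_le (g a), le_abs_self (g b), abs_nonneg (g a),
      abs_nonneg (g b)]
  -- a monotone `g` is continuous off a countable set, and there `φ' = g`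
  refine integral_eq_of_hasDerivAt_off_countable_of_le φ g hab
    hmono.countable_not_continuousWithinAt
    (lipschitzOnWith_of_subgradient hbound h).continuousOn (fun x hx => ?_)
    (MonotoneOn.intervalIntegrable (uIcc_of_le hab ▸ hmono))
  have hI : Icc a b ∈ 𝓝 x := Icc_mem_nhds hx.1.1 hx.1.2
  refine hasDerivAt_of_subgradient_s7 hI h ?_
  by_contra hcont
  exact hx.2 ⟨Ioo_subset_Icc_self hx.1, fun h' => hcont (h'.continuousAt hI)⟩

end Subgradient

theorem integral_abs_le_of_integrable_sq {α : Type*} [MeasurableSpace α] {μ : Measure α}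
    [IsFiniteMeasure μ] {f : α → ℝ} {c : ℝ} (hc : 0 < c) (hf : Integrable (fun x => f x ^ 2) μ) :
    ∫ x, |f x| ∂μ ≤ (∫ x, f x ^ 2 ∂μ + c ^ 2 * μ.real univ) / (2 * c) := by
  have hamgm : ∀ x, |f x| ≤ (f x ^ 2 + c ^ 2) / (2 * c) := fun x => by
    rw [le_div_iff₀ (by positivity)]
    nlinarith [sq_nonneg (|f x| - c), sq_abs (f x)]
  calc ∫ x, |f x| ∂μ ≤ ∫ x, (f x ^ 2 + c ^ 2) / (2 * c) ∂μ :=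
        integral_mono_of_nonneg (ae_of_all _ fun x => abs_nonneg _)
          ((hf.add (integrable_const _)).div_const _) (ae_of_all _ hamgm)
    _ = _ := by
        rw [integral_div, integral_add hf (integrable_const _), integral_const, smul_eq_mul,
          mul_comm (μ.real univ)]

section LayerCake

variable {a b : ℝ}

theorem integral_Ioc_ite_lt {xl xu c : ℝ} (hc : c ∈ Icc xl xu) :
    ∫ y in Ioc xl xu, (if y < c then (1 : ℝ) else 0) = c - xl := by
  have hI : Iio c ∩ Ioc xl xu = Ioo xl c := by
    ext y
    simp only [mem_inter_iff, mem_Ioc, mem_Iio, mem_Ioo]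
    exact ⟨fun h => ⟨h.2.1, h.1⟩, fun h => ⟨h.2, h.1, h.2.le.trans hc.2⟩⟩
  have hind : (fun y => if y < c then (1 : ℝ) else 0) = (Iio c).indicator 1 := by
    ext y
    simp [indicator_apply]
  rw [hind, integral_indicator_one measurableSet_Iio, measureReal_restrict_apply measurableSet_Iio,
    hI, Real.volume_real_Ioo_of_le hc.1]

theorem MonotoneOn.exists_inter_superlevel_ae_eq_Ioo {g : ℝ → ℝ} (hg : MonotoneOn g (Icc a b))
    (hab : a ≤ b) (y : ℝ) :
    ∃ s ∈ Icc a b, (Icc a b ∩ {t | y < g t} : Set ℝ) =ᵐ[volume] Ioo s b := by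
  set S := Icc a b ∩ {t | y < g t}
  rcases S.eq_empty_or_nonempty with hS | ⟨t₀, ht₀⟩
  · exact ⟨b, ⟨hab, le_rfl⟩, hS ▸ Ioo_self b ▸ EventuallyEq.rfl⟩
  have hbdd : BddBelow S := ⟨a, fun t ht => ht.1.1⟩
  refine ⟨sInf S, ⟨le_csInf ⟨t₀, ht₀⟩ fun t ht => ht.1.1, (csInf_le hbdd ht₀).trans ht₀.1.2⟩, ?_⟩
  have hsub : S ⊆ Icc (sInf S) b := fun t ht => ⟨csInf_le hbdd ht, ht.1.2⟩
  have hsup : Ioo (sInf S) b ⊆ S := fun t ht => by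
    obtain ⟨r, hr, hrt⟩ := (csInf_lt_iff hbdd ⟨t₀, ht₀⟩).1 ht.1
    have htI : t ∈ Icc a b := ⟨hr.1.1.trans hrt.le, ht.2.le⟩
    exact ⟨htI, hr.2.trans_le (hg hr.1 htI hrt.le)⟩
  exact (hsub.eventuallyLE.trans Ioo_ae_eq_Icc.symm.le).antisymm hsup.eventuallyLE

theorem MonotoneOn.exists_setIntegral_superlevel_eq {f g : ℝ → ℝ} (hg : MonotoneOn g (Icc a b))
    (hgm : Measurable g) (hab : a ≤ b) (y : ℝ) :
    ∃ s ∈ Icc a b, ∫ t in Icc a b, {t | y < g t}.indicator f t = ∫ t in s..b, f t := by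
  obtain ⟨s, hs, hae⟩ := hg.exists_inter_superlevel_ae_eq_Ioo hab y
  refine ⟨s, hs, ?_⟩
  rw [setIntegral_indicator (measurableSet_lt measurable_const hgm), setIntegral_congr_set hae,
    ← integral_Ioc_eq_integral_Ioo, ← intervalIntegral.integral_of_le hs.2]

theorem integrable_mul_sub_ite_lt {μ ν : Measure ℝ} [IsFiniteMeasure ν] {d g₁ g₂ : ℝ → ℝ}
    (hd : Integrable d μ) (hdm : Measurable d) (hm₁ : Measurable g₁) (hm₂ : Measurable g₂) :
    Integrable (Function.uncurry fun t y =>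
      d t * ((if y < g₁ t then (1 : ℝ) else 0) - (if y < g₂ t then 1 else 0))) (μ.prod ν) := by
  have hmeas : ∀ g : ℝ → ℝ, Measurable g →
      Measurable fun p : ℝ × ℝ => if p.2 < g p.1 then (1 : ℝ) else 0 := fun g hg =>
    Measurable.ite (measurableSet_lt measurable_snd (hg.comp measurable_fst))
      measurable_const measurable_const
  refine (hd.comp_fst ν).norm.mono'
    ((hdm.comp measurable_fst).mul ((hmeas g₁ hm₁).sub (hmeas g₂ hm₂))).aestronglyMeasurable
    (ae_of_all _ fun p => ?_)
  rw [Function.uncurry_apply_pair, norm_mul]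
  refine mul_le_of_le_one_right (norm_nonneg _) ?_
  split_ifs <;> norm_num

variable {g₁ g₂ φ₁ φ₂ : ℝ → ℝ}

theorem integral_sub_eq_of_subgradient (hab : a ≤ b)
    (h₁ : ∀ s ∈ Icc a b, ∀ t ∈ Icc a b, g₁ s * (t - s) ≤ φ₁ t - φ₁ s)
    (h₂ : ∀ s ∈ Icc a b, ∀ t ∈ Icc a b, g₂ s * (t - s) ≤ φ₂ t - φ₂ s) :
    ∫ t in a..b, (g₁ t - g₂ t) = (φ₁ b - φ₂ b) - (φ₁ a - φ₂ a) := by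
  rw [intervalIntegral.integral_sub
      (MonotoneOn.intervalIntegrable (uIcc_of_le hab ▸ monotoneOn_of_subgradient_s7 h₁))
      (MonotoneOn.intervalIntegrable (uIcc_of_le hab ▸ monotoneOn_of_subgradient_s7 h₂)),
    integral_eq_sub_of_subgradient hab h₁, integral_eq_sub_of_subgradient hab h₂]
  ring

variable {δ : ℝ}

theorem integral_mul_sub_ite_lt_le_of_subgradient (hab : a ≤ b)
    (hm₁ : Measurable g₁) (hm₂ : Measurable g₂)
    (h₁ : ∀ s ∈ Icc a b, ∀ t ∈ Icc a b, g₁ s * (t - s) ≤ φ₁ t - φ₁ s)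
    (h₂ : ∀ s ∈ Icc a b, ∀ t ∈ Icc a b, g₂ s * (t - s) ≤ φ₂ t - φ₂ s)
    (hclose : ∀ s ∈ Icc a b, |φ₁ s - φ₂ s| ≤ δ) (y : ℝ) :
    ∫ t in Icc a b, (g₁ t - g₂ t) * ((if y < g₁ t then 1 else 0) - (if y < g₂ t then 1 else 0))
      ≤ 2 * δ := by
  have hmono₁ : MonotoneOn g₁ (Icc a b) := monotoneOn_of_subgradient_s7 h₁
  have hmono₂ : MonotoneOn g₂ (Icc a b) := monotoneOn_of_subgradient_s7 h₂
  set d : ℝ → ℝ := fun t => g₁ t - g₂ t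
  have hd : IntegrableOn d (Icc a b) :=
    (hmono₁.integrableOn_isCompact isCompact_Icc).sub (hmono₂.integrableOn_isCompact isCompact_Icc)
  have hincr : ∀ s ∈ Icc a b, ∫ t in s..b, d t = (φ₁ b - φ₂ b) - (φ₁ s - φ₂ s) := fun s hs =>
    have hsub : Icc s b ⊆ Icc a b := Icc_subset_Icc_left hs.1
    integral_sub_eq_of_subgradient hs.2 (fun u hu v hv => h₁ u (hsub hu) v (hsub hv))
      (fun u hu v hv => h₂ u (hsub hu) v (hsub hv))
  obtain ⟨s₁, hs₁, e₁⟩ := hmono₁.exists_setIntegral_superlevel_eq (f := d) hm₁ hab y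
  obtain ⟨s₂, hs₂, e₂⟩ := hmono₂.exists_setIntegral_superlevel_eq (f := d) hm₂ hab y
  have := abs_le.1 (hclose s₁ hs₁)
  have := abs_le.1 (hclose s₂ hs₂)
  calc ∫ t in Icc a b, d t * ((if y < g₁ t then 1 else 0) - (if y < g₂ t then 1 else 0))
      = ∫ t in Icc a b, ({t | y < g₁ t}.indicator d t - {t | y < g₂ t}.indicator d t) := by
        congr 1
        ext t
        simp only [indicator_apply, mem_ofPred_eq]
        split_ifs <;> ring
    _ = (φ₁ s₂ - φ₂ s₂) - (φ₁ s₁ - φ₂ s₁) := by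
        rw [integral_sub (hd.indicator (measurableSet_lt measurable_const hm₁))
          (hd.indicator (measurableSet_lt measurable_const hm₂)), e₁, e₂, hincr s₁ hs₁,
          hincr s₂ hs₂]
        ring
    _ ≤ 2 * δ := by linarith

variable {xl xu : ℝ}

theorem integral_sq_sub_le_of_subgradient (hab : a ≤ b)
    (hm₁ : Measurable g₁) (hm₂ : Measurable g₂)
    (hg₁ : MapsTo g₁ (Icc a b) (Icc xl xu)) (hg₂ : MapsTo g₂ (Icc a b) (Icc xl xu))
    (h₁ : ∀ s ∈ Icc a b, ∀ t ∈ Icc a b, g₁ s * (t - s) ≤ φ₁ t - φ₁ s)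
    (h₂ : ∀ s ∈ Icc a b, ∀ t ∈ Icc a b, g₂ s * (t - s) ≤ φ₂ t - φ₂ s)
    (hclose : ∀ s ∈ Icc a b, |φ₁ s - φ₂ s| ≤ δ) :
    ∫ t in Icc a b, (g₁ t - g₂ t) ^ 2 ≤ 2 * δ * (xu - xl) := by
  have hxl : xl ≤ xu := (hg₁ ⟨le_rfl, hab⟩).1.trans (hg₁ ⟨le_rfl, hab⟩).2
  have hd : IntegrableOn (fun t => g₁ t - g₂ t) (Icc a b) :=
    ((monotoneOn_of_subgradient_s7 h₁).integrableOn_isCompact isCompact_Icc).sub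
      ((monotoneOn_of_subgradient_s7 h₂).integrableOn_isCompact isCompact_Icc)
  have hlayer : ∀ c : ℝ, IntegrableOn (fun y => if y < c then (1 : ℝ) else 0) (Ioc xl xu) :=
    fun c => (integrable_const 1).mono'
      (Measurable.ite measurableSet_Iio measurable_const measurable_const).aestronglyMeasurable
      (ae_of_all _ fun y => by split_ifs <;> simp)
  set F : ℝ → ℝ → ℝ := fun t y =>
    (g₁ t - g₂ t) * ((if y < g₁ t then 1 else 0) - (if y < g₂ t then 1 else 0))
  have hF := integrable_mul_sub_ite_lt (ν := volume.restrict (Ioc xl xu)) hd (hm₁.sub hm₂) hm₁ hm₂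
  calc ∫ t in Icc a b, (g₁ t - g₂ t) ^ 2 = ∫ t in Icc a b, ∫ y in Ioc xl xu, F t y := by
        refine setIntegral_congr_fun measurableSet_Icc fun t ht => ?_
        rw [integral_const_mul, integral_sub (hlayer _) (hlayer _),
          integral_Ioc_ite_lt (hg₁ ht), integral_Ioc_ite_lt (hg₂ ht)]
        ring
    _ = ∫ y in Ioc xl xu, ∫ t in Icc a b, F t y := integral_integral_swap hF
    _ ≤ ∫ y in Ioc xl xu, 2 * δ :=
        integral_mono hF.integral_prod_right (integrable_const _)
          (integral_mul_sub_ite_lt_le_of_subgradient hab hm₁ hm₂ h₁ h₂ hclose)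
    _ = 2 * δ * (xu - xl) := by
        rw [setIntegral_const, Real.volume_real_Ioc_of_le hxl, smul_eq_mul, mul_comm]

theorem integral_abs_sub_le_of_subgradient (hab : a ≤ b) (hδ : 0 < δ)
    (hm₁ : Measurable g₁) (hm₂ : Measurable g₂)
    (hg₁ : MapsTo g₁ (Icc a b) (Icc xl xu)) (hg₂ : MapsTo g₂ (Icc a b) (Icc xl xu))
    (h₁ : ∀ s ∈ Icc a b, ∀ t ∈ Icc a b, g₁ s * (t - s) ≤ φ₁ t - φ₁ s)
    (h₂ : ∀ s ∈ Icc a b, ∀ t ∈ Icc a b, g₂ s * (t - s) ≤ φ₂ t - φ₂ s)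
    (hclose : ∀ s ∈ Icc a b, |φ₁ s - φ₂ s| ≤ δ) :
    ∫ t in Icc a b, |g₁ t - g₂ t| ≤ √(2 * δ) * ((xu - xl) + (b - a)) / 2 := by
  have hc : 0 < √(2 * δ) := Real.sqrt_pos.2 (by positivity)
  have hsq : IntegrableOn (fun t => (g₁ t - g₂ t) ^ 2) (Icc a b) := by
    refine Measure.integrableOn_of_bounded (M := (xu - xl) ^ 2) measure_Icc_lt_top.ne
      ((hm₁.sub hm₂).pow_const 2).aestronglyMeasurable ?_
    filter_upwards [ae_restrict_mem measurableSet_Icc] with t ht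
    obtain ⟨h₁l, h₁u⟩ := hg₁ ht
    obtain ⟨h₂l, h₂u⟩ := hg₂ ht
    rw [Real.norm_eq_abs, abs_pow]
    exact pow_le_pow_left₀ (abs_nonneg _) (abs_le.2 ⟨by linarith, by linarith⟩) 2
  calc ∫ t in Icc a b, |g₁ t - g₂ t|
      ≤ ((∫ t in Icc a b, (g₁ t - g₂ t) ^ 2) + √(2 * δ) ^ 2 * (b - a)) / (2 * √(2 * δ)) := by
        simpa only [measureReal_restrict_apply_univ, Real.volume_real_Icc_of_le hab] using
          integral_abs_le_of_integrable_sq hc hsq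
    _ ≤ (2 * δ * (xu - xl) + √(2 * δ) ^ 2 * (b - a)) / (2 * √(2 * δ)) := by
        gcongr
        exact integral_sq_sub_le_of_subgradient hab hm₁ hm₂ hg₁ hg₂ h₁ h₂ hclose
    _ = √(2 * δ) * ((xu - xl) + (b - a)) / 2 := by
        have hc2 : 2 * δ = √(2 * δ) ^ 2 := (Real.sq_sqrt (by positivity)).symm
        rw [div_eq_div_iff (by positivity) two_ne_zero]
        linear_combination 2 * (xu - xl) * hc2

end LayerCake

noncomputable def conjugateValue {ι : Type*} [Fintype ι] (u : (ι → ℝ) → ℝ)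
    (x : (ι → ℝ) → ι → ℝ) (t : ι → ℝ) : ℝ :=
  ∑ i, x t i * t i - u (x t)

section Selection

variable {ι : Type*} [Fintype ι] {X T : Set (ι → ℝ)}

theorem sum_mul_sub_le_conjugateValue_sub {u : (ι → ℝ) → ℝ} {x : (ι → ℝ) → ι → ℝ}
    (hsel : ∀ t ∈ T, x t ∈ X ∧ ∀ y ∈ X, ∑ i, y i * t i - u y ≤ ∑ i, x t i * t i - u (x t))
    {t t' : ι → ℝ} (ht : t ∈ T) (ht' : t' ∈ T) :
    ∑ i, x t i * (t' i - t i) ≤ conjugateValue u x t' - conjugateValue u x t := by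
  have := (hsel t' ht').2 (x t) (hsel t ht).1
  simp only [conjugateValue, mul_sub, Finset.sum_sub_distrib]
  linarith

theorem abs_conjugateValue_sub_le {u₁ u₂ : (ι → ℝ) → ℝ} {x₁ x₂ : (ι → ℝ) → ι → ℝ} {δ : ℝ}
    (hsel₁ : ∀ t ∈ T, x₁ t ∈ X ∧ ∀ y ∈ X, ∑ i, y i * t i - u₁ y ≤ ∑ i, x₁ t i * t i - u₁ (x₁ t))
    (hsel₂ : ∀ t ∈ T, x₂ t ∈ X ∧ ∀ y ∈ X, ∑ i, y i * t i - u₂ y ≤ ∑ i, x₂ t i * t i - u₂ (x₂ t))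
    (hclose : ∀ y ∈ X, |u₁ y - u₂ y| ≤ δ) {t : ι → ℝ} (ht : t ∈ T) :
    |conjugateValue u₁ x₁ t - conjugateValue u₂ x₂ t| ≤ δ := by
  have h₁ := (hsel₁ t ht).2 (x₂ t) (hsel₂ t ht).1
  have h₂ := (hsel₂ t ht).2 (x₁ t) (hsel₁ t ht).1
  have := abs_le.1 (hclose _ (hsel₁ t ht).1)
  have := abs_le.1 (hclose _ (hsel₂ t ht).1)
  rw [conjugateValue, conjugateValue, abs_le]
  constructor <;> linarith

theorem integrableOn_abs_sub_apply {x₁ x₂ : (ι → ℝ) → ι → ℝ} {xl xu : ι → ℝ}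
    (hm₁ : Measurable x₁) (hm₂ : Measurable x₂) (hTm : MeasurableSet T) (hT : volume T ≠ ⊤)
    (h₁ : MapsTo x₁ T (Icc xl xu)) (h₂ : MapsTo x₂ T (Icc xl xu)) (i : ι) :
    IntegrableOn (fun t => |x₁ t i - x₂ t i|) T := by
  refine Measure.integrableOn_of_bounded (M := xu i - xl i) hT
    (((measurable_pi_apply i).comp hm₁).sub
      ((measurable_pi_apply i).comp hm₂)).abs.aestronglyMeasurable
    (ae_restrict_of_forall_mem hTm fun t ht => ?_)
  obtain ⟨hl₁, hu₁⟩ := h₁ ht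
  obtain ⟨hl₂, hu₂⟩ := h₂ ht
  rw [Real.norm_eq_abs, abs_abs, abs_le]
  constructor <;> linarith [hl₁ i, hu₁ i, hl₂ i, hu₂ i]

end Selection

theorem subgradient_insertNth {m : ℕ} {X : Set (Fin (m + 1) → ℝ)} {a b : Fin (m + 1) → ℝ}
    {u : (Fin (m + 1) → ℝ) → ℝ} {x : (Fin (m + 1) → ℝ) → Fin (m + 1) → ℝ}
    (hsel : ∀ t ∈ Icc a b, x t ∈ X ∧ ∀ y ∈ X, ∑ i, y i * t i - u y ≤ ∑ i, x t i * t i - u (x t))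
    (i : Fin (m + 1)) {y : Fin m → ℝ}
    (hy : y ∈ Icc (fun j => a (i.succAbove j)) (fun j => b (i.succAbove j))) :
    ∀ r ∈ Icc (a i) (b i), ∀ r' ∈ Icc (a i) (b i),
      x (i.insertNth r y) i * (r' - r) ≤
        conjugateValue u x (i.insertNth r' y) - conjugateValue u x (i.insertNth r y) := by
  intro r hr r' hr'
  have := sum_mul_sub_le_conjugateValue_sub hsel (Fin.insertNth_mem_Icc.2 ⟨hr, hy⟩)
    (Fin.insertNth_mem_Icc.2 ⟨hr', hy⟩)
  simpa [Fin.sum_univ_succAbove _ i] using this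

theorem setIntegral_Icc_le_of_forall_slice_le {m : ℕ} (i : Fin (m + 1))
    {a b : Fin (m + 1) → ℝ} (hab : a ≤ b) {f : (Fin (m + 1) → ℝ) → ℝ}
    (hf : IntegrableOn f (Icc a b)) {C : ℝ}
    (hC : ∀ y ∈ Icc (fun j => a (i.succAbove j)) (fun j => b (i.succAbove j)),
      ∫ r in Icc (a i) (b i), f (i.insertNth r y) ≤ C) :
    ∫ t in Icc a b, f t ≤ C * ∏ j, (b (i.succAbove j) - a (i.succAbove j)) := by
  set e := MeasurableEquiv.piFinSuccAbove (fun _ : Fin (m + 1) => ℝ) i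
  have he : MeasurePreserving e.symm (volume.prod volume) volume :=
    (volume_preserving_piFinSuccAbove (fun _ : Fin (m + 1) => ℝ) i).symm
  set S := Icc (fun j => a (i.succAbove j)) (fun j => b (i.succAbove j))
  have hpre : e.symm ⁻¹' Icc a b = Icc (a i) (b i) ×ˢ S := by
    ext ⟨r, y⟩
    exact Fin.insertNth_mem_Icc
  have : IsFiniteMeasure (volume.restrict S) := isFiniteMeasure_restrict.2 measure_Icc_lt_top.ne
  have hint : Integrable (fun z => f (e.symm z))
      ((volume.restrict (Icc (a i) (b i))).prod (volume.restrict S)) := by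
    rw [Measure.prod_restrict, ← hpre]
    exact (he.integrableOn_comp_preimage e.symm.measurableEmbedding).2 hf
  calc ∫ t in Icc a b, f t
      = ∫ y in S, ∫ r in Icc (a i) (b i), f (i.insertNth r y) := by
        rw [← he.setIntegral_preimage_emb e.symm.measurableEmbedding, hpre, ← Measure.prod_restrict,
          integral_prod_symm _ hint]
        rfl
    _ ≤ ∫ _ in S, C :=
        setIntegral_mono_on hint.integral_prod_right (integrable_const C) measurableSet_Icc hC
    _ = C * ∏ j, (b (i.succAbove j) - a (i.succAbove j)) := by
        rw [setIntegral_const, smul_eq_mul, mul_comm, measureReal_def,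
          Real.volume_Icc_pi_toReal fun j => hab _]

theorem integral_abs_sub_apply_le {m : ℕ} {xl xu tl tu : Fin (m + 1) → ℝ} {δ : ℝ}
    {u₁ u₂ : (Fin (m + 1) → ℝ) → ℝ} {x₁ x₂ : (Fin (m + 1) → ℝ) → Fin (m + 1) → ℝ}
    (ht : tl ≤ tu) (hδ : 0 < δ) (hm₁ : Measurable x₁) (hm₂ : Measurable x₂)
    (hsel₁ : ∀ t ∈ Icc tl tu, x₁ t ∈ Icc xl xu ∧
      ∀ y ∈ Icc xl xu, ∑ i, y i * t i - u₁ y ≤ ∑ i, x₁ t i * t i - u₁ (x₁ t))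
    (hsel₂ : ∀ t ∈ Icc tl tu, x₂ t ∈ Icc xl xu ∧
      ∀ y ∈ Icc xl xu, ∑ i, y i * t i - u₂ y ≤ ∑ i, x₂ t i * t i - u₂ (x₂ t))
    (hclose : ∀ y ∈ Icc xl xu, |u₁ y - u₂ y| ≤ δ) (i : Fin (m + 1)) :
    ∫ t in Icc tl tu, |x₁ t i - x₂ t i| ≤
      √(2 * δ) * ((xu i - xl i) + (tu i - tl i)) / 2 *
        ∏ j, (tu (i.succAbove j) - tl (i.succAbove j)) := by
  refine setIntegral_Icc_le_of_forall_slice_le i ht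
    (integrableOn_abs_sub_apply hm₁ hm₂ measurableSet_Icc measure_Icc_lt_top.ne
      (fun t ht => (hsel₁ t ht).1) (fun t ht => (hsel₂ t ht).1) i) fun y hy => ?_
  have hmem : ∀ r ∈ Icc (tl i) (tu i), i.insertNth r y ∈ Icc tl tu := fun r hr =>
    Fin.insertNth_mem_Icc.2 ⟨hr, hy⟩
  have hins : Measurable fun r : ℝ => (i.insertNth r y : Fin (m + 1) → ℝ) :=
    (MeasurableEquiv.piFinSuccAbove (fun _ => ℝ) i).symm.measurable.comp
      (measurable_id.prodMk measurable_const)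
  exact integral_abs_sub_le_of_subgradient (ht i) hδ
    ((measurable_pi_apply i).comp (hm₁.comp hins)) ((measurable_pi_apply i).comp (hm₂.comp hins))
    (fun r hr => ⟨(hsel₁ _ (hmem r hr)).1.1 i, (hsel₁ _ (hmem r hr)).1.2 i⟩)
    (fun r hr => ⟨(hsel₂ _ (hmem r hr)).1.1 i, (hsel₂ _ (hmem r hr)).1.2 i⟩)
    (subgradient_insertNth hsel₁ i hy) (subgradient_insertNth hsel₂ i hy)
    fun r hr => abs_conjugateValue_sub_le hsel₁ hsel₂ hclose (hmem r hr)

theorem sum_mul_prod_succAbove {m : ℕ} (w len : Fin (m + 1) → ℝ) (hlen : ∀ i, len i ≠ 0) :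
    ∑ i, w i * ∏ j, len (i.succAbove j) = (∑ i, w i / len i) * ∏ i, len i := by
  rw [Finset.sum_mul]
  refine Finset.sum_congr rfl fun i _ => ?_
  have := hlen i
  rw [Fin.prod_univ_succAbove len i]
  field_simp

theorem conjugate_selection_l1_bound_multi_dim_general
    (n : ℕ) (xl xu tl tu : Fin n → ℝ) (δ : ℝ)
    (ht : ∀ i, tl i < tu i) (hδ : 0 < δ)
    (u1 u2 : (Fin n → ℝ) → ℝ)
    (x1 x2 : (Fin n → ℝ) → Fin n → ℝ)
    (hm1 : Measurable x1) (hm2 : Measurable x2)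
    (hsel1 : ∀ t ∈ Set.pi Set.univ fun i => Set.Icc (tl i) (tu i),
      (x1 t ∈ Set.pi Set.univ fun i => Set.Icc (xl i) (xu i)) ∧
      ∀ x ∈ Set.pi Set.univ fun i => Set.Icc (xl i) (xu i),
        (∑ i, x i * t i) - u1 x ≤ (∑ i, x1 t i * t i) - u1 (x1 t))
    (hsel2 : ∀ t ∈ Set.pi Set.univ fun i => Set.Icc (tl i) (tu i),
      (x2 t ∈ Set.pi Set.univ fun i => Set.Icc (xl i) (xu i)) ∧
      ∀ x ∈ Set.pi Set.univ fun i => Set.Icc (xl i) (xu i),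
        (∑ i, x i * t i) - u2 x ≤ (∑ i, x2 t i * t i) - u2 (x2 t))
    (hclose : ∀ x ∈ Set.pi Set.univ fun i => Set.Icc (xl i) (xu i), |u1 x - u2 x| ≤ δ) :
    (∫ t in Set.pi Set.univ fun i => Set.Icc (tl i) (tu i), ∑ i, |x1 t i - x2 t i|) ≤
      Real.sqrt (2 * δ) * ((∑ i, (xu i - xl i) / (tu i - tl i)) + n) *
        (∏ i, (tu i - tl i)) / 2 := by
  rcases n with _ | m
  · simp
  simp only [pi_univ_Icc] at hsel1 hsel2 hclose ⊢
  have hint := integrableOn_abs_sub_apply hm1 hm2 measurableSet_Icc measure_Icc_lt_top.ne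
    (fun t ht => (hsel1 t ht).1) (fun t ht => (hsel2 t ht).1)
  calc ∫ t in Icc tl tu, ∑ i, |x1 t i - x2 t i|
      = ∑ i, ∫ t in Icc tl tu, |x1 t i - x2 t i| := integral_finsetSum _ fun i _ => hint i
    _ ≤ ∑ i, √(2 * δ) * ((xu i - xl i) + (tu i - tl i)) / 2 *
          ∏ j, (tu (i.succAbove j) - tl (i.succAbove j)) :=
        Finset.sum_le_sum fun i _ =>
          integral_abs_sub_apply_le (fun i => (ht i).le) hδ hm1 hm2 hsel1 hsel2 hclose i
    _ = _ := by
        have hlen : ∀ i, tu i - tl i ≠ 0 := fun i => (sub_pos.2 (ht i)).ne'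
        have hterm : ∀ i, √(2 * δ) * ((xu i - xl i) + (tu i - tl i)) / 2 / (tu i - tl i) =
            √(2 * δ) / 2 * ((xu i - xl i) / (tu i - tl i)) + √(2 * δ) / 2 := fun i => by
          have := hlen i
          field_simp
        rw [sum_mul_prod_succAbove _ (fun i => tu i - tl i) hlen,
          Finset.sum_congr rfl fun i _ => hterm i, Finset.sum_add_distrib, ← Finset.mul_sum,
          Finset.sum_const, Finset.card_univ, Fintype.card_fin, nsmul_eq_mul]
        ring

/-- Multi-dimensional conjugate stability.
If `u₁, u₂` are convex on the box `X = ∏ᵢ [xl i, xu i]`, `x₁, x₂` are measurable argmax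
selections of `x ↦ ⟨x, t⟩ − uⱼ(x)` over `X` for `t` in the box `T = ∏ᵢ [tl i, tu i]`, and
`sup_{x ∈ X} |u₁ x − u₂ x| ≤ δ`, then
`∫_T ‖x₁(t) − x₂(t)‖₁ dt ≤ √(2δ)·(Σᵢ (xu i − xl i)/(tu i − tl i) + n)·∏ᵢ (tu i − tl i)/2`. -/
theorem conjugate_selection_l1_bound_multi_dim
    (n : ℕ) (xl xu tl tu : Fin n → ℝ) (δ : ℝ)
    (hx : ∀ i, xl i < xu i) (ht : ∀ i, tl i < tu i) (hδ : 0 < δ)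
    (u1 u2 : (Fin n → ℝ) → ℝ)
    (hu1 : ConvexOn ℝ (Set.pi Set.univ fun i => Set.Icc (xl i) (xu i)) u1)
    (hu2 : ConvexOn ℝ (Set.pi Set.univ fun i => Set.Icc (xl i) (xu i)) u2)
    (x1 x2 : (Fin n → ℝ) → Fin n → ℝ)
    (hm1 : Measurable x1) (hm2 : Measurable x2)
    (hsel1 : ∀ t ∈ Set.pi Set.univ fun i => Set.Icc (tl i) (tu i),
      (x1 t ∈ Set.pi Set.univ fun i => Set.Icc (xl i) (xu i)) ∧
      ∀ x ∈ Set.pi Set.univ fun i => Set.Icc (xl i) (xu i),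
        (∑ i, x i * t i) - u1 x ≤ (∑ i, x1 t i * t i) - u1 (x1 t))
    (hsel2 : ∀ t ∈ Set.pi Set.univ fun i => Set.Icc (tl i) (tu i),
      (x2 t ∈ Set.pi Set.univ fun i => Set.Icc (xl i) (xu i)) ∧
      ∀ x ∈ Set.pi Set.univ fun i => Set.Icc (xl i) (xu i),
        (∑ i, x i * t i) - u2 x ≤ (∑ i, x2 t i * t i) - u2 (x2 t))
    (hclose : ∀ x ∈ Set.pi Set.univ fun i => Set.Icc (xl i) (xu i), |u1 x - u2 x| ≤ δ) :
    (∫ t in Set.pi Set.univ fun i => Set.Icc (tl i) (tu i), ∑ i, |x1 t i - x2 t i|) ≤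
      Real.sqrt (2 * δ) * ((∑ i, (xu i - xl i) / (tu i - tl i)) + n) *
        (∏ i, (tu i - tl i)) / 2 :=
  conjugate_selection_l1_bound_multi_dim_general n xl xu tl tu δ ht hδ u1 u2 x1 x2 hm1 hm2 hsel1
    hsel2 hclose
end

section
/- (Pointwise payment stability.) Let X ⊆ ℝ^d be nonempty and compact, c : X → ℝ, D ≥ 0, t ∈ ℝ^d with ‖t‖_∞ ≤ D, and let p^1, p^2 : X → ℝ satisfy sup_{x ∈ X} |p^1(x) − p^2(x)| ≤ δ. For j = 1, 2 let x^j ∈ X satisfy ⟨t, x^j⟩ + c(x^j) − p^j(x^j) ≥ ⟨t, x⟩ + c(x) − p^j(x) for all x ∈ X. Then |p^2(x^2) − p^1(x^1)| ≤ D · ‖x^2 − x^1‖₁ + |c(x^2) − c(x^1)| + δ. -/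
open Finset

/-- Pointwise payment stability.
If `p¹, p²` are pricing functions within uniform distance `δ` on a nonempty compact set
`X`, `‖t‖_∞ ≤ D`, and `x¹, x²` are utility maximizers for the buyer with valuation
`⟨t, ·⟩ + c(·)` facing `p¹, p²` respectively, then
`|p²(x²) − p¹(x¹)| ≤ D·‖x² − x¹‖₁ + |c(x²) − c(x¹)| + δ`. -/
theorem pointwise_payment_stability
    (dd : ℕ) (X : Set (Fin dd → ℝ))
    (hXne : X.Nonempty) (hXcomp : IsCompact X)
    (c : (Fin dd → ℝ) → ℝ)
    (D δ : ℝ) (hD : 0 ≤ D)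
    (t : Fin dd → ℝ) (htD : ∀ j, |t j| ≤ D)
    (p1 p2 : (Fin dd → ℝ) → ℝ)
    (hclose : ∀ x ∈ X, |p1 x - p2 x| ≤ δ)
    (x1 x2 : Fin dd → ℝ) (hx1 : x1 ∈ X) (hx2 : x2 ∈ X)
    (hmax1 : ∀ x ∈ X, (∑ j, t j * x j) + c x - p1 x ≤
      (∑ j, t j * x1 j) + c x1 - p1 x1)
    (hmax2 : ∀ x ∈ X, (∑ j, t j * x j) + c x - p2 x ≤
      (∑ j, t j * x2 j) + c x2 - p2 x2) :
    |p2 x2 - p1 x1| ≤ D * (∑ j, |x2 j - x1 j|) + |c x2 - c x1| + δ := by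
  have hsum : |∑ j, t j * x2 j - ∑ j, t j * x1 j| ≤ D * ∑ j, |x2 j - x1 j| := by
    rw [← Finset.sum_sub_distrib]
    calc |∑ j, (t j * x2 j - t j * x1 j)| ≤ ∑ j, |t j * x2 j - t j * x1 j| :=
      Finset.abs_sum_le_sum_abs _ _
    _ ≤ ∑ j, D * |x2 j - x1 j| := by
        refine Finset.sum_le_sum fun j _ => ?_
        rw [← mul_sub, abs_mul]
        exact mul_le_mul_of_nonneg_right (htD j) (abs_nonneg _)
    _ = D * ∑ j, |x2 j - x1 j| := (Finset.mul_sum _ _ _).symm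
  have h1 := hmax1 x2 hx2
  have h2 := hmax2 x1 hx1
  have hc1 := hclose x1 hx1
  have hc2 := hclose x2 hx2
  rw [abs_le] at hsum hc1 hc2 ⊢
  constructor
  · nlinarith [neg_abs_le (c x2 - c x1), le_abs_self (c x2 - c x1)]
  · nlinarith [neg_abs_le (c x2 - c x1), le_abs_self (c x2 - c x1)]
end

section
/- (Partial GroupMax Network outputs are partially convex and continuous.) Fix integers d_x, d_y, K ≥ 1, G ≥ 1, E ≥ 1 and set h = G·E. Let Y ⊆ ℝ^{d_y}. Suppose given continuous matrix- and vector-valued functions on Y: W_0 : Y → ℝ^{h×d_x} and b_0 : Y → ℝ^h; for 1 ≤ k ≤ K−1, W_k : Y → ℝ^{h×G} with all entries nonnegative, W^r_k : Y → ℝ^{h×d_x}, and b_k : Y → ℝ^h; and finally w^x : Y → ℝ^G with all entries nonnegative, w^r : Y → ℝ^{d_x}, and b : Y → ℝ. Define GroupMax : ℝ^h → ℝ^G by identifying ℝ^h with ℝ^{G×E} and setting (GroupMax(v))_g = max_{1 ≤ e ≤ E} v_{g,e}. Define recursively x_0(x, y) = x; h_k(x, y) = W_{k−1}(y)·x_{k−1}(x,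 y) + W^r_{k−1}(y)·x + b_{k−1}(y) (with W^r_0 taken to be the zero matrix) and x_k(x, y) = GroupMax(h_k(x, y)) for 1 ≤ k ≤ K; and output z(x, y) = ⟨w^x(y), x_K(x, y)⟩ + ⟨w^r(y), x⟩ + b(y). Then z is continuous on ℝ^{d_x} × Y, and for every fixed y ∈ Y, the map x ↦ z(x, y) is convex on ℝ^{d_x}. -/
/-!
Every coordinate of every layer is jointly continuous in `(x, y)` on `ℝ^{dx} × Y` and convex in
`x` for fixed `y ∈ Y`. Both properties survive sums, multiplication by continuous coefficients
that are nonnegative on `Y`, and finite maxima, which is all GroupMax does; the residual terms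
`Wʳ_k(y)·x` and `⟨wʳ(y), x⟩` are linear in `x`, so their weights may have any sign. Induction
over the layers gives the claim for `z`.
-/

open Finset

namespace PartialGroupMax

/-- The GroupMax activation: the `h = G·E` inputs are identified with `ℝ^{G×E}`;
group `g` outputs the maximum of its `E` entries. -/
noncomputable def groupMax {G E : ℕ} [NeZero E] (v : Fin G × Fin E → ℝ) :
    Fin G → ℝ :=
  fun g => Finset.univ.sup' Finset.univ_nonempty fun e : Fin E => v (g, e)

/-- The hidden layers of a Partial GroupMax Network: `pgmHidden … k x y` is the hidden
state `x_{k+1}(x, y)`. Layer 1 is `GroupMax(W₀(y)·x + b₀(y))` (the residual matrix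
`Wʳ₀` is taken to be zero), and layer `k+1` is
`GroupMax(W_k(y)·x_k + Wʳ_k(y)·x + b_k(y))`. -/
noncomputable def pgmHidden {dx dy G E : ℕ} [NeZero E]
    (W0 : (Fin dy → ℝ) → Fin G × Fin E → Fin dx → ℝ)
    (b0 : (Fin dy → ℝ) → Fin G × Fin E → ℝ)
    (W : ℕ → (Fin dy → ℝ) → Fin G × Fin E → Fin G → ℝ)
    (Wr : ℕ → (Fin dy → ℝ) → Fin G × Fin E → Fin dx → ℝ)
    (bb : ℕ → (Fin dy → ℝ) → Fin G × Fin E → ℝ) :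
    ℕ → (Fin dx → ℝ) → (Fin dy → ℝ) → Fin G → ℝ
  | 0 => fun x y => groupMax fun ge => (∑ j, W0 y ge j * x j) + b0 y ge
  | (k + 1) => fun x y => groupMax fun ge =>
      (∑ g, W (k + 1) y ge g * pgmHidden W0 b0 W Wr bb k x y g) +
      (∑ j, Wr (k + 1) y ge j * x j) + bb (k + 1) y ge

def PartiallyConvexOn {X Y : Type*} [TopologicalSpace X] [AddCommMonoid X] [Module ℝ X]
    [TopologicalSpace Y] (s : Set Y) (f : X → Y → ℝ) : Prop :=
  ContinuousOn (Function.uncurry f) (Set.univ ×ˢ s) ∧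
    ∀ y ∈ s, ConvexOn ℝ Set.univ fun x => f x y

lemma continuousOn_comp_snd_prod {X Y Z : Type*} [TopologicalSpace X] [TopologicalSpace Y]
    [TopologicalSpace Z] {s : Set Y} {c : Y → Z} (hc : ContinuousOn c s) :
    ContinuousOn (fun q : X × Y => c q.2) (Set.univ ×ˢ s) :=
  hc.comp continuousOn_snd fun _ hq => hq.2

section PartiallyConvexOn

variable {X Y ι : Type*} [TopologicalSpace X] [AddCommMonoid X] [Module ℝ X]
  [TopologicalSpace Y] {s : Set Y}

lemma partiallyConvexOn_const {b : Y → ℝ} (hb : ContinuousOn b s) :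
    PartiallyConvexOn s fun (_ : X) y => b y :=
  ⟨continuousOn_comp_snd_prod hb, fun y _ => convexOn_const (b y) convex_univ⟩

lemma partiallyConvexOn_mul_apply {c : Y → ℝ} (hc : ContinuousOn c s) (j : ι) :
    PartiallyConvexOn s fun (x : ι → ℝ) y => c y * x j :=
  ⟨(continuousOn_comp_snd_prod hc).mul (continuous_apply j).fst'.continuousOn,
    fun y _ => (c y • LinearMap.proj (R := ℝ) (φ := fun _ : ι => ℝ) j).convexOn convex_univ⟩

namespace PartiallyConvexOn

lemma add {f g : X → Y → ℝ} (hf : PartiallyConvexOn s f) (hg : PartiallyConvexOn s g) :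
    PartiallyConvexOn s fun x y => f x y + g x y :=
  ⟨hf.1.add hg.1, fun y hy => (hf.2 y hy).add (hg.2 y hy)⟩

lemma sup {f g : X → Y → ℝ} (hf : PartiallyConvexOn s f) (hg : PartiallyConvexOn s g) :
    PartiallyConvexOn s (f ⊔ g) :=
  ⟨hf.1.sup hg.1, fun y hy => (hf.2 y hy).sup (hg.2 y hy)⟩

lemma mul_left {c : Y → ℝ} {f : X → Y → ℝ} (hc : ContinuousOn c s) (hc0 : ∀ y ∈ s, 0 ≤ c y)
    (hf : PartiallyConvexOn s f) : PartiallyConvexOn s fun x y => c y * f x y :=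
  ⟨(continuousOn_comp_snd_prod hc).mul hf.1, fun y hy => (hf.2 y hy).smul (hc0 y hy)⟩

lemma finset_sum (t : Finset ι) {f : ι → X → Y → ℝ} (hf : ∀ i ∈ t, PartiallyConvexOn s (f i)) :
    PartiallyConvexOn s fun x y => ∑ i ∈ t, f i x y := by
  simpa only [← Finset.sum_apply] using Finset.sum_induction f (PartiallyConvexOn s)
    (fun _ _ => add) (partiallyConvexOn_const continuousOn_const) hf

lemma finset_sup' {t : Finset ι} (hne : t.Nonempty) {f : ι → X → Y → ℝ}
    (hf : ∀ i ∈ t, PartiallyConvexOn s (f i)) :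
    PartiallyConvexOn s fun x y => t.sup' hne fun i => f i x y := by
  simpa only [← Finset.sup'_apply] using
    Finset.sup'_induction hne f (fun _ h₁ _ h₂ => h₁.sup h₂) hf

lemma sum_mul_left [Fintype ι] {c : Y → ι → ℝ} {f : ι → X → Y → ℝ}
    (hc : ∀ i, ContinuousOn (fun y => c y i) s) (hc0 : ∀ y ∈ s, ∀ i, 0 ≤ c y i)
    (hf : ∀ i, PartiallyConvexOn s (f i)) :
    PartiallyConvexOn s fun x y => ∑ i, c y i * f i x y :=
  finset_sum _ fun i _ => (hf i).mul_left (hc i) fun y hy => hc0 y hy i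

end PartiallyConvexOn

lemma partiallyConvexOn_sum_mul_apply [Fintype ι] {c : Y → ι → ℝ}
    (hc : ∀ j, ContinuousOn (fun y => c y j) s) :
    PartiallyConvexOn s fun (x : ι → ℝ) y => ∑ j, c y j * x j :=
  PartiallyConvexOn.finset_sum _ fun j _ => partiallyConvexOn_mul_apply (hc j) j

lemma PartiallyConvexOn.groupMax {G E : ℕ} [NeZero E] {F : Fin G × Fin E → X → Y → ℝ}
    (hF : ∀ ge, PartiallyConvexOn s (F ge)) (g : Fin G) :
    PartiallyConvexOn s fun x y => groupMax (fun ge => F ge x y) g :=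
  finset_sup' Finset.univ_nonempty fun e _ => hF (g, e)

end PartiallyConvexOn

theorem partiallyConvexOn_pgmHidden {dx dy G E : ℕ} [NeZero E] (K : ℕ)
    (Y : Set (Fin dy → ℝ))
    (W0 : (Fin dy → ℝ) → Fin G × Fin E → Fin dx → ℝ)
    (b0 : (Fin dy → ℝ) → Fin G × Fin E → ℝ)
    (W : ℕ → (Fin dy → ℝ) → Fin G × Fin E → Fin G → ℝ)
    (Wr : ℕ → (Fin dy → ℝ) → Fin G × Fin E → Fin dx → ℝ)
    (bb : ℕ → (Fin dy → ℝ) → Fin G × Fin E → ℝ)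
    (hW0 : ∀ ge j, ContinuousOn (fun y => W0 y ge j) Y)
    (hb0 : ∀ ge, ContinuousOn (fun y => b0 y ge) Y)
    (hW : ∀ k, 1 ≤ k → k ≤ K - 1 → ∀ ge g, ContinuousOn (fun y => W k y ge g) Y)
    (hWr : ∀ k, 1 ≤ k → k ≤ K - 1 → ∀ ge j, ContinuousOn (fun y => Wr k y ge j) Y)
    (hbb : ∀ k, 1 ≤ k → k ≤ K - 1 → ∀ ge, ContinuousOn (fun y => bb k y ge) Y)
    (hWpos : ∀ k, 1 ≤ k → k ≤ K - 1 → ∀ y ∈ Y, ∀ ge g, 0 ≤ W k y ge g) :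
    ∀ k ≤ K - 1, ∀ g,
      PartiallyConvexOn Y fun x y => pgmHidden W0 b0 W Wr bb k x y g := by
  intro k
  induction k with
  | zero =>
    intro _
    exact PartiallyConvexOn.groupMax fun ge =>
      (partiallyConvexOn_sum_mul_apply (hW0 ge)).add (partiallyConvexOn_const (hb0 ge))
  | succ k ih =>
    intro hk
    have hk1 : 1 ≤ k + 1 := Nat.le_add_left 1 k
    exact PartiallyConvexOn.groupMax fun ge =>
      (((PartiallyConvexOn.sum_mul_left (hW (k + 1) hk1 hk ge)
        (fun y hy => hWpos (k + 1) hk1 hk y hy ge) (ih (by omega))).add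
        (partiallyConvexOn_sum_mul_apply (hWr (k + 1) hk1 hk ge))).add
        (partiallyConvexOn_const (hbb (k + 1) hk1 hk ge)))

theorem pgm_network_partially_convex_and_continuous_general
    (dx dy K G E : ℕ) [NeZero E]
    (Y : Set (Fin dy → ℝ))
    (W0 : (Fin dy → ℝ) → Fin G × Fin E → Fin dx → ℝ)
    (b0 : (Fin dy → ℝ) → Fin G × Fin E → ℝ)
    (W : ℕ → (Fin dy → ℝ) → Fin G × Fin E → Fin G → ℝ)
    (Wr : ℕ → (Fin dy → ℝ) → Fin G × Fin E → Fin dx → ℝ)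
    (bb : ℕ → (Fin dy → ℝ) → Fin G × Fin E → ℝ)
    (wx : (Fin dy → ℝ) → Fin G → ℝ)
    (wr : (Fin dy → ℝ) → Fin dx → ℝ)
    (b : (Fin dy → ℝ) → ℝ)
    -- continuity of all generated affine maps, as functions of y on Y
    (hW0 : ∀ ge j, ContinuousOn (fun y => W0 y ge j) Y)
    (hb0 : ∀ ge, ContinuousOn (fun y => b0 y ge) Y)
    (hW : ∀ k, 1 ≤ k → k ≤ K - 1 → ∀ ge g, ContinuousOn (fun y => W k y ge g) Y)
    (hWr : ∀ k, 1 ≤ k → k ≤ K - 1 → ∀ ge j, ContinuousOn (fun y => Wr k y ge j) Y)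
    (hbb : ∀ k, 1 ≤ k → k ≤ K - 1 → ∀ ge, ContinuousOn (fun y => bb k y ge) Y)
    (hwx : ∀ g, ContinuousOn (fun y => wx y g) Y)
    (hwr : ∀ j, ContinuousOn (fun y => wr y j) Y)
    (hb : ContinuousOn b Y)
    -- nonnegativity of the hidden-state weight matrices
    (hWpos : ∀ k, 1 ≤ k → k ≤ K - 1 → ∀ y ∈ Y, ∀ ge g, 0 ≤ W k y ge g)
    (hwxpos : ∀ y ∈ Y, ∀ g, 0 ≤ wx y g)
    -- the network output
    (z : (Fin dx → ℝ) → (Fin dy → ℝ) → ℝ)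
    (hz : ∀ x y, z x y =
      (∑ g, wx y g * pgmHidden W0 b0 W Wr bb (K - 1) x y g) +
      (∑ j, wr y j * x j) + b y) :
    ContinuousOn (fun q : (Fin dx → ℝ) × (Fin dy → ℝ) => z q.1 q.2)
      ((Set.univ : Set (Fin dx → ℝ)) ×ˢ Y) ∧
    ∀ y ∈ Y, ConvexOn ℝ (Set.univ : Set (Fin dx → ℝ)) (fun x => z x y) := by
  obtain rfl : z = fun x y => (∑ g, wx y g * pgmHidden W0 b0 W Wr bb (K - 1) x y g) +
      (∑ j, wr y j * x j) + b y := funext fun x => funext (hz x)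
  have hidden := partiallyConvexOn_pgmHidden K Y W0 b0 W Wr bb hW0 hb0 hW hWr hbb hWpos
    (K - 1) le_rfl
  exact ((PartiallyConvexOn.sum_mul_left hwx hwxpos hidden).add
    (partiallyConvexOn_sum_mul_apply hwr)).add (partiallyConvexOn_const hb)

/-- Partial GroupMax Network outputs are partially convex and
continuous. With all affine maps continuous functions of `y ∈ Y`, and all weight
matrices acting on the hidden state entrywise nonnegative, the output
`z(x, y) = ⟨wˣ(y), x_K(x, y)⟩ + ⟨wʳ(y), x⟩ + b(y)` of a `K`-layer Partial GroupMax
Network is continuous on `ℝ^{dx} × Y` and, for each fixed `y ∈ Y`, convex in `x`. -/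
theorem pgm_network_partially_convex_and_continuous
    (dx dy K G E : ℕ) (hK : 1 ≤ K) (hG : 1 ≤ G) (hE : 1 ≤ E) [NeZero E]
    (Y : Set (Fin dy → ℝ))
    (W0 : (Fin dy → ℝ) → Fin G × Fin E → Fin dx → ℝ)
    (b0 : (Fin dy → ℝ) → Fin G × Fin E → ℝ)
    (W : ℕ → (Fin dy → ℝ) → Fin G × Fin E → Fin G → ℝ)
    (Wr : ℕ → (Fin dy → ℝ) → Fin G × Fin E → Fin dx → ℝ)
    (bb : ℕ → (Fin dy → ℝ) → Fin G × Fin E → ℝ)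
    (wx : (Fin dy → ℝ) → Fin G → ℝ)
    (wr : (Fin dy → ℝ) → Fin dx → ℝ)
    (b : (Fin dy → ℝ) → ℝ)
    -- continuity of all generated affine maps, as functions of y on Y
    (hW0 : ∀ ge j, ContinuousOn (fun y => W0 y ge j) Y)
    (hb0 : ∀ ge, ContinuousOn (fun y => b0 y ge) Y)
    (hW : ∀ k, 1 ≤ k → k ≤ K - 1 → ∀ ge g, ContinuousOn (fun y => W k y ge g) Y)
    (hWr : ∀ k, 1 ≤ k → k ≤ K - 1 → ∀ ge j, ContinuousOn (fun y => Wr k y ge j) Y)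
    (hbb : ∀ k, 1 ≤ k → k ≤ K - 1 → ∀ ge, ContinuousOn (fun y => bb k y ge) Y)
    (hwx : ∀ g, ContinuousOn (fun y => wx y g) Y)
    (hwr : ∀ j, ContinuousOn (fun y => wr y j) Y)
    (hb : ContinuousOn b Y)
    -- nonnegativity of the hidden-state weight matrices
    (hWpos : ∀ k, 1 ≤ k → k ≤ K - 1 → ∀ y ∈ Y, ∀ ge g, 0 ≤ W k y ge g)
    (hwxpos : ∀ y ∈ Y, ∀ g, 0 ≤ wx y g)
    -- the network output
    (z : (Fin dx → ℝ) → (Fin dy → ℝ) → ℝ)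
    (hz : ∀ x y, z x y =
      (∑ g, wx y g * pgmHidden W0 b0 W Wr bb (K - 1) x y g) +
      (∑ j, wr y j * x j) + b y) :
    ContinuousOn (fun q : (Fin dx → ℝ) × (Fin dy → ℝ) => z q.1 q.2)
      ((Set.univ : Set (Fin dx → ℝ)) ×ˢ Y) ∧
    ∀ y ∈ Y, ConvexOn ℝ (Set.univ : Set (Fin dx → ℝ)) (fun x => z x y) :=
  pgm_network_partially_convex_and_continuous_general dx dy K G E Y W0 b0 W Wr bb wx wr b hW0 hb0 hW
    hWr hbb hwx hwr hb hWpos hwxpos z hz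

end PartialGroupMax
end

section
/- (Parameterized max-affine functions universally approximate partial convex functions.) Let X ⊆ ℝ^{d_x} be a nonempty compact convex set and Y ⊆ ℝ^{d_y} a nonempty compact set, and let f : X × Y → ℝ be continuous on (x, y) and convex in x for each fixed y ∈ Y. Then for every ε > 0 there exist N ∈ ℕ and continuous functions a_k : Y → ℝ^{d_x} and b_k : Y → ℝ for k = 1, …, N such that sup_{(x,y) ∈ X × Y} | f(x, y) − max_{1 ≤ k ≤ N} ( ⟨a_k(y), x⟩ + b_k(y) ) | ≤ ε. -/
/-!
Replace `f (·, y)` by its Pasch–Hausdorff envelope `F (x, y) = inf_{v ∈ X} (f (v, y) + C ‖x - v‖)`.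
By uniform continuity on the compact set `X × Y`, for `C` large this is a function that is convex
and `C`-Lipschitz on the whole space and uniformly `ε/2`-close to `f` on `X`. Its subgradients
therefore lie in the ball of radius `C` of the dual, and a finite net `φ_k` of that ball serves as
slopes for all `(x, y)` at once. The offsets `b_k (y) = inf_{u ∈ X} (F (u, y) - φ_k u)` are
continuous in `y` by compactness of `X`, keep `φ_k x + b_k (y)` below `F`, and come within
`‖φ_k - ψ‖ diam X` of `F (x, y)` when `ψ` is a subgradient at `x`.
-/

open Set Metric
open scoped NNReal

theorem IsCompact.continuousOn_iInf {α β : Type*} [TopologicalSpace α] [TopologicalSpace β]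
    {K : Set β} (hK : IsCompact K) {Y : Set α} {g : α → β → ℝ}
    (hg : ContinuousOn (fun q : α × β => g q.1 q.2) (Y ×ˢ K)) :
    ContinuousOn (fun y => ⨅ v : K, g y v) Y := by
  have : CompactSpace K := isCompact_iff_compactSpace.mp hK
  rw [continuousOn_iff_continuous_domRestrict]
  have hg' : Continuous fun q : Y × K => g q.1 q.2 :=
    hg.comp_continuous (continuous_subtype_val.prodMap continuous_subtype_val)
      fun q => ⟨q.1.2, q.2.2⟩
  show Continuous fun y : Y => ⨅ v : K, g y v
  simpa only [image_univ, sInf_range] using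
    isCompact_univ.continuous_sInf (f := fun (y : Y) (v : K) => g y v) hg'

theorem IsCompact.exists_le_add_mul_dist_add {α : Type*} [PseudoMetricSpace α] {K : Set α}
    (hK : IsCompact K) {g : α → ℝ} (hg : ContinuousOn g K) {η : ℝ} (hη : 0 < η) :
    ∃ C : ℝ, 0 ≤ C ∧ ∀ p ∈ K, ∀ q ∈ K, g p ≤ g q + C * dist p q + η := by
  obtain ⟨δ, hδ, hclose⟩ :=
    Metric.uniformContinuousOn_iff.1 (hK.uniformContinuousOn_of_continuous hg) η hη
  obtain ⟨M, hM⟩ := hK.exists_bound_of_continuousOn hg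
  refine ⟨2 * |M| / δ, by positivity, fun p hp q hq => ?_⟩
  have hCd : 0 ≤ 2 * |M| / δ * dist p q := by positivity
  rcases lt_or_ge (dist p q) δ with hpq | hpq
  · have := hclose p hp q hq hpq
    rw [Real.dist_eq] at this
    linarith [le_abs_self (g p - g q)]
  · have h2M : 2 * |M| ≤ 2 * |M| / δ * dist p q := by
      rw [div_mul_eq_mul_div, le_div_iff₀ hδ]
      gcongr
    have hp' := (Real.norm_eq_abs _ ▸ hM p hp).trans (le_abs_self M)
    have hq' := (Real.norm_eq_abs _ ▸ hM q hq).trans (le_abs_self M)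
    linarith [le_abs_self (g p), neg_abs_le (g q)]

theorem IsCompact.exists_fin_succ_forall_exists_dist_lt {α : Type*} [PseudoMetricSpace α]
    {K : Set α} (hK : IsCompact K) (hne : K.Nonempty) {δ : ℝ} (hδ : 0 < δ) :
    ∃ (N : ℕ) (w : Fin (N + 1) → α), ∀ u ∈ K, ∃ k, dist u (w k) < δ := by
  obtain ⟨T, -, hTfin, hcover⟩ := finite_cover_balls_of_compact hK hδ
  have := hTfin.to_subtype
  obtain ⟨n, ⟨e⟩⟩ := Finite.exists_equiv_fin T
  obtain ⟨t₀, ht₀, -⟩ := mem_iUnion₂.1 (hcover hne.some_mem)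
  obtain ⟨N, rfl⟩ := Nat.exists_eq_add_one_of_ne_zero (e ⟨t₀, ht₀⟩).pos.ne'
  refine ⟨N, fun k => e.symm k, fun u hu => ?_⟩
  obtain ⟨t, ht, hut⟩ := mem_iUnion₂.1 (hcover hu)
  exact ⟨e ⟨t, ht⟩, by simpa using hut⟩

section LipEnvelope

variable {α : Type*} [PseudoMetricSpace α] {s : Set α} {g : α → ℝ} {C : ℝ}

noncomputable def lipEnvelope (s : Set α) (g : α → ℝ) (C : ℝ) (x : α) : ℝ :=
  ⨅ v : s, g v + C * dist x v

theorem bddBelow_range_add_mul_dist (hg : BddBelow (g '' s)) (hC : 0 ≤ C) (x : α) :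
    BddBelow (range fun v : s => g v + C * dist x v) := by
  obtain ⟨m, hm⟩ := hg
  refine ⟨m, ?_⟩
  rintro _ ⟨v, rfl⟩
  have hv := hm (mem_image_of_mem g v.2)
  have : 0 ≤ C * dist x v := by positivity
  linarith

theorem lipEnvelope_le (hg : BddBelow (g '' s)) (hC : 0 ≤ C) (x : α) {v : α} (hv : v ∈ s) :
    lipEnvelope s g C x ≤ g v + C * dist x v :=
  ciInf_le (bddBelow_range_add_mul_dist hg hC x) ⟨v, hv⟩

theorem le_lipEnvelope (hs : s.Nonempty) {a : ℝ} {x : α}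
    (h : ∀ v ∈ s, a ≤ g v + C * dist x v) : a ≤ lipEnvelope s g C x :=
  have := hs.to_subtype
  le_ciInf fun v => h v v.2

theorem lipEnvelope_le_add_mul (hs : s.Nonempty) (hg : BddBelow (g '' s)) (hC : 0 ≤ C)
    (x z : α) : lipEnvelope s g C x ≤ lipEnvelope s g C z + C * dist x z := by
  suffices lipEnvelope s g C x - C * dist x z ≤ lipEnvelope s g C z by linarith
  refine le_lipEnvelope hs fun v hv => ?_
  have := lipEnvelope_le hg hC x hv
  have := mul_le_mul_of_nonneg_left (dist_triangle x z v) hC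
  linarith

theorem convexOn_lipEnvelope {E : Type*} [NormedAddCommGroup E] [NormedSpace ℝ E] {s : Set E}
    {g : E → ℝ} (hs : s.Nonempty) (hgc : ConvexOn ℝ s g) (hgb : BddBelow (g '' s)) (hC : 0 ≤ C) :
    ConvexOn ℝ univ (lipEnvelope s g C) := by
  refine ⟨convex_univ, fun u _ w _ a b ha hb hab => le_of_forall_pos_le_add fun e he => ?_⟩
  have := hs.to_subtype
  obtain ⟨⟨p, hp⟩, hpu⟩ := exists_lt_of_ciInf_lt (lt_add_of_pos_right (lipEnvelope s g C u) he)
  obtain ⟨⟨q, hq⟩, hqw⟩ := exists_lt_of_ciInf_lt (lt_add_of_pos_right (lipEnvelope s g C w) he)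
  have hdist : dist (a • u + b • w) (a • p + b • q) ≤ a * dist u p + b * dist w q := by
    calc _ ≤ dist (a • u) (a • p) + dist (b • w) (b • q) := dist_add_add_le _ _ _ _
      _ = _ := by rw [dist_smul₀, dist_smul₀, Real.norm_of_nonneg ha, Real.norm_of_nonneg hb]
  have hgpq := hgc.2 hp hq ha hb hab
  simp only [smul_eq_mul] at hgpq hpu hqw ⊢
  calc lipEnvelope s g C (a • u + b • w)
      ≤ g (a • p + b • q) + C * dist (a • u + b • w) (a • p + b • q) :=
        lipEnvelope_le hgb hC _ (hgc.1 hp hq ha hb hab)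
    _ ≤ a * (g p + C * dist u p) + b * (g q + C * dist w q) := by
        nlinarith [mul_le_mul_of_nonneg_left hdist hC]
    _ ≤ a * (lipEnvelope s g C u + e) + b * (lipEnvelope s g C w + e) := by gcongr
    _ = a * lipEnvelope s g C u + b * lipEnvelope s g C w + e := by
        linear_combination e * hab

end LipEnvelope

section Subgradient

variable {E : Type*} [NormedAddCommGroup E] [NormedSpace ℝ E]

theorem ConvexOn.exists_subgradient {F : E → ℝ} (hF : ConvexOn ℝ univ F) (hc : Continuous F)
    (x : E) : ∃ ψ : E →L[ℝ] ℝ, ∀ z, F x + ψ (z - x) ≤ F z := by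
  -- separate `(x, F x)` from the open convex strict epigraph of `F`
  have hopen : IsOpen {p : E × ℝ | p.1 ∈ univ ∧ F p.1 < p.2} := by
    simpa only [mem_univ, true_and] using
      isOpen_lt (f := fun p : E × ℝ => F p.1) (by fun_prop) continuous_snd
  obtain ⟨φ, hφ⟩ := geometric_hahn_banach_open_point hF.convex_strict_epigraph hopen
    (x := (x, F x)) (by simp)
  have hsplit : ∀ z t, φ (z, t) = φ (z, 0) + t * φ (0, 1) := fun z t => by
    have : ((z, t) : E × ℝ) = (z, 0) + t • (0, 1) := Prod.ext (by simp) (by simp)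
    rw [this, map_add, map_smul, smul_eq_mul]
  set c := φ (0, 1)
  have key : ∀ z t, F z < t → φ (z, 0) + t * c < φ (x, 0) + F x * c := fun z t ht => by
    rw [← hsplit, ← hsplit]
    exact hφ (z, t) ⟨mem_univ z, ht⟩
  have hc : 0 < -c := by
    have := key x (F x + 1) (lt_add_one _)
    linarith
  refine ⟨(-c)⁻¹ • φ.comp (.inl ℝ E ℝ), fun z => le_of_forall_gt fun t ht => ?_⟩
  have := key z t ht
  rw [map_sub]
  simp only [smul_apply, ContinuousLinearMap.comp_apply,
    ContinuousLinearMap.inl_apply, smul_eq_mul, ← mul_sub]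
  have : (-c)⁻¹ * (φ (z, 0) - φ (x, 0)) < t - F x := by
    rw [inv_mul_lt_iff₀ hc]
    linarith
  linarith

theorem norm_le_of_subgradient {F : E → ℝ} {C : ℝ≥0} (hF : LipschitzWith C F)
    {ψ : E →L[ℝ] ℝ} {x : E} (hψ : ∀ z, F x + ψ (z - x) ≤ F z) : ‖ψ‖ ≤ C := by
  have bound : ∀ h, ψ h ≤ C * ‖h‖ := fun h => by
    have h₁ := hψ (x + h)
    have h₂ := (le_abs_self _).trans (hF.dist_le_mul (x + h) x)
    rw [add_sub_cancel_left] at h₁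
    rw [dist_eq_norm, add_sub_cancel_left] at h₂
    linarith
  refine ψ.opNorm_le_bound C.2 fun h => abs_le.2 ⟨?_, bound h⟩
  have := bound (-h)
  rw [map_neg, norm_neg] at this
  linarith

variable {s : Set E} {F : E → ℝ} {x : E}

theorem add_iInf_sub_le (φ : E →L[ℝ] ℝ) (hb : BddBelow (range fun u : s => F u - φ u))
    (hx : x ∈ s) : φ x + ⨅ u : s, (F u - φ u) ≤ F x := by
  have := ciInf_le hb ⟨x, hx⟩
  linarith

theorem sub_le_add_iInf_sub (hs : Bornology.IsBounded s) (hx : x ∈ s) {ψ : E →L[ℝ] ℝ}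
    (hψ : ∀ z, F x + ψ (z - x) ≤ F z) (φ : E →L[ℝ] ℝ) :
    F x - ‖φ - ψ‖ * diam s ≤ φ x + ⨅ u : s, (F u - φ u) := by
  have : Nonempty s := ⟨⟨x, hx⟩⟩
  suffices ∀ u ∈ s, F x - ‖φ - ψ‖ * diam s - φ x ≤ F u - φ u by
    linarith [le_ciInf fun u : s => this u u.2]
  intro u hu
  have h₁ := hψ u
  have h₂ : (φ - ψ) (u - x) ≤ ‖φ - ψ‖ * diam s :=
    calc _ ≤ ‖(φ - ψ) (u - x)‖ := Real.le_norm_self _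
      _ ≤ ‖φ - ψ‖ * ‖u - x‖ := (φ - ψ).le_opNorm _
      _ ≤ ‖φ - ψ‖ * diam s := by
        gcongr
        exact dist_eq_norm u x ▸ dist_le_diam_of_mem hs hu hx
  simp only [sub_apply, map_sub] at h₁ h₂
  linarith

end Subgradient

section PartialConvex

variable {E P : Type*} [NormedAddCommGroup E] [NormedSpace ℝ E] [PseudoMetricSpace P]
  {X : Set E} {Y : Set P}

theorem exists_lipschitz_convexOn_approx {f : E → P → ℝ} (hXne : X.Nonempty)
    (hXcomp : IsCompact X) (hYcomp : IsCompact Y)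
    (hfcont : ContinuousOn (fun q : E × P => f q.1 q.2) (X ×ˢ Y))
    (hfconv : ∀ y ∈ Y, ConvexOn ℝ X (f · y)) {ε : ℝ} (hε : 0 < ε) :
    ∃ (C : ℝ≥0) (F : E → P → ℝ), ContinuousOn (fun q : E × P => F q.1 q.2) (X ×ˢ Y) ∧
      (∀ y ∈ Y, LipschitzWith C (F · y)) ∧ (∀ y ∈ Y, ConvexOn ℝ univ (F · y)) ∧
      ∀ x ∈ X, ∀ y ∈ Y, f x y - ε ≤ F x y ∧ F x y ≤ f x y := by
  have hK := hXcomp.prod hYcomp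
  obtain ⟨C, hC, hfC⟩ := hK.exists_le_add_mul_dist_add hfcont hε
  lift C to ℝ≥0 using hC
  have hbdd : ∀ y ∈ Y, BddBelow ((f · y) '' X) := fun y hy =>
    (hK.bddBelow_image hfcont).mono (by rintro _ ⟨x, hx, rfl⟩; exact ⟨(x, y), ⟨hx, hy⟩, rfl⟩)
  refine ⟨C, fun x y => lipEnvelope X (f · y) C x, ?_, fun y hy => ?_, fun y hy => ?_,
    fun x hx y hy => ⟨?_, ?_⟩⟩
  · have hf' : ContinuousOn (fun r : (E × P) × E => f r.2 r.1.2) ((univ ×ˢ Y) ×ˢ X) :=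
      hfcont.comp (continuous_snd.prodMk (continuous_snd.comp continuous_fst)).continuousOn
        fun r hr => ⟨hr.2, hr.1.2⟩
    exact (hXcomp.continuousOn_iInf (Y := univ ×ˢ Y) (g := fun q v => f v q.2 + C * dist q.1 v)
      (hf'.add (by fun_prop))).mono (prod_mono (subset_univ X) le_rfl)
  · exact LipschitzWith.of_le_add_mul C (lipEnvelope_le_add_mul hXne (hbdd y hy) C.2)
  · exact convexOn_lipEnvelope hXne (hfconv y hy) (hbdd y hy) C.2
  · refine le_lipEnvelope hXne fun v hv => ?_
    have := hfC (x, y) ⟨hx, hy⟩ (v, y) ⟨hv, hy⟩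
    simp only [Prod.dist_eq, dist_self, max_eq_left dist_nonneg] at this
    linarith
  · simpa using lipEnvelope_le (hbdd y hy) C.2 x hx

theorem exists_affine_approx_of_lipschitz_convexOn [FiniteDimensional ℝ E] (hXcomp : IsCompact X)
    {F : E → P → ℝ} {C : ℝ≥0} (hFcont : ContinuousOn (fun q : E × P => F q.1 q.2) (X ×ˢ Y))
    (hFlip : ∀ y ∈ Y, LipschitzWith C (F · y)) (hFconv : ∀ y ∈ Y, ConvexOn ℝ univ (F · y))
    {ε : ℝ} (hε : 0 < ε) :
    ∃ (N : ℕ) (φ : Fin (N + 1) → E →L[ℝ] ℝ) (b : Fin (N + 1) → P → ℝ),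
      (∀ k, ContinuousOn (b k) Y) ∧ (∀ k, ∀ x ∈ X, ∀ y ∈ Y, φ k x + b k y ≤ F x y) ∧
      ∀ x ∈ X, ∀ y ∈ Y, ∃ k, F x y - ε ≤ φ k x + b k y := by
  obtain ⟨δ, hδ, hδε⟩ := exists_pos_mul_lt hε (diam X)
  -- all subgradients lie in this ball (`norm_le_of_subgradient`), so the net provides the slopes
  obtain ⟨N, φ, hφ⟩ :=
    (isCompact_closedBall (0 : E →L[ℝ] ℝ) C).exists_fin_succ_forall_exists_dist_lt
      (nonempty_closedBall.2 C.2) hδ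
  refine ⟨N, φ, fun k y => ⨅ u : X, (F u y - φ k u), fun k => ?_, fun k x hx y hy => ?_,
    fun x hx y hy => ?_⟩
  · have hF' : ContinuousOn (fun q : P × E => F q.2 q.1) (Y ×ˢ X) :=
      hFcont.comp continuous_swap.continuousOn fun q hq => ⟨hq.2, hq.1⟩
    exact hXcomp.continuousOn_iInf (g := fun y u => F u y - φ k u) (hF'.sub (by fun_prop))
  · refine add_iInf_sub_le (F := (F · y)) (φ k) ?_ hx
    simpa only [image_eq_range] using
      hXcomp.bddBelow_image (f := fun u => F u y - φ k u)
        ((hFlip y hy).continuous.sub (φ k).continuous).continuousOn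
  · obtain ⟨ψ, hψ⟩ := (hFconv y hy).exists_subgradient (hFlip y hy).continuous x
    obtain ⟨k, hk⟩ := hφ ψ (mem_closedBall_zero_iff.2 (norm_le_of_subgradient (hFlip y hy) hψ))
    have : ‖φ k - ψ‖ * diam X ≤ ε := by
      rw [← dist_eq_norm, dist_comm, mul_comm]
      exact (mul_le_mul_of_nonneg_left hk.le diam_nonneg).trans hδε.le
    exact ⟨k, by linarith [sub_le_add_iInf_sub (F := (F · y)) hXcomp.isBounded hx hψ (φ k)]⟩

theorem exists_affine_approx_of_convexOn [FiniteDimensional ℝ E] {f : E → P → ℝ}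
    (hXne : X.Nonempty) (hXcomp : IsCompact X) (hYcomp : IsCompact Y)
    (hfcont : ContinuousOn (fun q : E × P => f q.1 q.2) (X ×ˢ Y))
    (hfconv : ∀ y ∈ Y, ConvexOn ℝ X (f · y)) {ε : ℝ} (hε : 0 < ε) :
    ∃ (N : ℕ) (φ : Fin (N + 1) → E →L[ℝ] ℝ) (b : Fin (N + 1) → P → ℝ),
      (∀ k, ContinuousOn (b k) Y) ∧ (∀ k, ∀ x ∈ X, ∀ y ∈ Y, φ k x + b k y ≤ f x y) ∧
      ∀ x ∈ X, ∀ y ∈ Y, ∃ k, f x y - ε ≤ φ k x + b k y := by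
  obtain ⟨C, F, hFcont, hFlip, hFconv, hfF⟩ :=
    exists_lipschitz_convexOn_approx hXne hXcomp hYcomp hfcont hfconv (half_pos hε)
  obtain ⟨N, φ, b, hb, hle, hge⟩ :=
    exists_affine_approx_of_lipschitz_convexOn hXcomp hFcont hFlip hFconv (half_pos hε)
  refine ⟨N, φ, b, hb, fun k x hx y hy => (hle k x hx y hy).trans (hfF x hx y hy).2,
    fun x hx y hy => ?_⟩
  obtain ⟨k, hk⟩ := hge x hx y hy
  exact ⟨k, by linarith [(hfF x hx y hy).1]⟩

end PartialConvex

theorem ContinuousLinearMap.sum_apply_single_mul {ι : Type*} [Fintype ι] [DecidableEq ι]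
    (φ : (ι → ℝ) →L[ℝ] ℝ) (x : ι → ℝ) : ∑ j, φ (Pi.single j 1) * x j = φ x := by
  conv_rhs => rw [← Finset.univ_sum_single x]
  simp only [map_sum]
  refine Finset.sum_congr rfl fun j _ => ?_
  rw [mul_comm, ← smul_eq_mul, ← map_smul, ← Pi.single_smul', smul_eq_mul, mul_one]

theorem pma_universal_approximation_general
    (dx dy : ℕ)
    (X : Set (Fin dx → ℝ)) (Y : Set (Fin dy → ℝ))
    (hXne : X.Nonempty) (hXcomp : IsCompact X)
    (hYcomp : IsCompact Y)
    (f : (Fin dx → ℝ) → (Fin dy → ℝ) → ℝ)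
    (hfcont : ContinuousOn (fun q : (Fin dx → ℝ) × (Fin dy → ℝ) => f q.1 q.2) (X ×ˢ Y))
    (hfconv : ∀ y ∈ Y, ConvexOn ℝ X (fun x => f x y))
    (ε : ℝ) (hε : 0 < ε) :
    ∃ (N : ℕ) (a : Fin (N + 1) → (Fin dy → ℝ) → Fin dx → ℝ)
      (b : Fin (N + 1) → (Fin dy → ℝ) → ℝ),
      (∀ k, ContinuousOn (a k) Y) ∧ (∀ k, ContinuousOn (b k) Y) ∧
      ∀ x ∈ X, ∀ y ∈ Y,
        |f x y -
          Finset.univ.sup' Finset.univ_nonempty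
            (fun k : Fin (N + 1) => (∑ j, a k y j * x j) + b k y)| ≤ ε := by
  obtain ⟨N, φ, b, hb, hle, hge⟩ :=
    exists_affine_approx_of_convexOn hXne hXcomp hYcomp hfcont hfconv hε
  refine ⟨N, fun k _ j => φ k (Pi.single j 1), b, fun k => continuousOn_const, hb,
    fun x hx y hy => ?_⟩
  simp only [ContinuousLinearMap.sum_apply_single_mul]
  obtain ⟨k, hk⟩ := hge x hx y hy
  rw [abs_sub_le_iff]
  constructor
  · linarith [Finset.le_sup' (fun k => φ k x + b k y) (Finset.mem_univ k)]
  · linarith [Finset.sup'_le Finset.univ_nonempty (fun k => φ k x + b k y)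
      fun k _ => hle k x hx y hy]

/-- Parameterized max-affine functions universally approximate partial
convex functions. If `f : X × Y → ℝ` is continuous and convex in `x` for each `y ∈ Y`,
with `X` compact convex and `Y` compact, then for every `ε > 0` there are finitely many
continuous coefficient functions `a_k : Y → ℝ^{dx}`, `b_k : Y → ℝ` such that the
parameterized max-affine function `max_k (⟨a_k(y), x⟩ + b_k(y))` uniformly
`ε`-approximates `f` on `X × Y`. -/
theorem pma_universal_approximation
    (dx dy : ℕ)
    (X : Set (Fin dx → ℝ)) (Y : Set (Fin dy → ℝ))
    (hXne : X.Nonempty) (hXconv : Convex ℝ X) (hXcomp : IsCompact X)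
    (hYne : Y.Nonempty) (hYcomp : IsCompact Y)
    (f : (Fin dx → ℝ) → (Fin dy → ℝ) → ℝ)
    (hfcont : ContinuousOn (fun q : (Fin dx → ℝ) × (Fin dy → ℝ) => f q.1 q.2) (X ×ˢ Y))
    (hfconv : ∀ y ∈ Y, ConvexOn ℝ X (fun x => f x y))
    (ε : ℝ) (hε : 0 < ε) :
    ∃ (N : ℕ) (a : Fin (N + 1) → (Fin dy → ℝ) → Fin dx → ℝ)
      (b : Fin (N + 1) → (Fin dy → ℝ) → ℝ),
      (∀ k, ContinuousOn (a k) Y) ∧ (∀ k, ContinuousOn (b k) Y) ∧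
      ∀ x ∈ X, ∀ y ∈ Y,
        |f x y -
          Finset.univ.sup' Finset.univ_nonempty
            (fun k : Fin (N + 1) => (∑ j, a k y j * x j) + b k y)| ≤ ε :=
  pma_universal_approximation_general dx dy X Y hXne hXcomp hYcomp f hfcont hfconv ε hε
end

section
/- (Payment recovery for truthful mechanisms.) Let M^d = (x^d, p^d) be a truthful direct mechanism. For each i and each type profile t define the truthful utility ũ_i(t) = ⟨t_i, x^d_i(t)⟩ + c_i(x^d_i(t)) − p^d_i(t), and define the pricing rule p^m_i(x; t_{-i}) = c_i(x) + sup_{t'_i ∈ 𝒯_i} ( ⟨t'_i, x⟩ − ũ_i(t'_i, t_{-i}) ) for x ∈ 𝒳_i, t_{-i} ∈ 𝒯_{-i}. Then for every type profile t ∈ 𝒯 and every i, p^m_i(x^d_i(t); t_{-i}) = p^d_i(t). -/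
open Finset

/-- Payment recovery for truthful mechanisms.
For a truthful direct mechanism `(xd, pd)`, defining the truthful utilities
`ũᵢ(t) = ⟨tᵢ, xdᵢ(t)⟩ + cᵢ(xdᵢ(t)) − pdᵢ(t)` and the conjugate pricing rules
`pmᵢ(x; t₋ᵢ) = cᵢ(x) + sup_{t'ᵢ ∈ 𝒯ᵢ} (⟨t'ᵢ, x⟩ − ũᵢ(t'ᵢ, t₋ᵢ))`, one recovers the
payments: `pmᵢ(xdᵢ(t); t₋ᵢ) = pdᵢ(t)` for every type profile `t ∈ 𝒯`. -/
theorem payment_recovery_for_truthful_mechanisms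
    (n : ℕ) (d : Fin n → ℕ)
    (T X : ∀ i : Fin n, Set (Fin (d i) → ℝ))
    (hTne : ∀ i, (T i).Nonempty) (hTconv : ∀ i, Convex ℝ (T i))
    (hTcomp : ∀ i, IsCompact (T i))
    (hXne : ∀ i, (X i).Nonempty) (hXconv : ∀ i, Convex ℝ (X i))
    (hXcomp : ∀ i, IsCompact (X i))
    (hX0 : ∀ i, (0 : Fin (d i) → ℝ) ∈ X i)
    (c : ∀ i : Fin n, (Fin (d i) → ℝ) → ℝ)
    (hc : ∀ i, ContinuousOn (c i) (X i))
    (hc0 : ∀ i, c i (0 : Fin (d i) → ℝ) = 0)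
    -- the truthful direct mechanism
    (xd : (∀ i, Fin (d i) → ℝ) → ∀ i, Fin (d i) → ℝ)
    (pd : (∀ i, Fin (d i) → ℝ) → Fin n → ℝ)
    (hxd : ∀ t : ∀ i, Fin (d i) → ℝ, (∀ j, t j ∈ T j) → ∀ i, xd t i ∈ X i)
    -- IR
    (hIR : ∀ (t' : ∀ i, Fin (d i) → ℝ), (∀ j, t' j ∈ T j) → ∀ i : Fin n, ∀ ti ∈ T i,
      0 ≤ (∑ k, xd (Function.update t' i ti) i k * ti k)
          + c i (xd (Function.update t' i ti) i) - pd (Function.update t' i ti) i)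
    -- IC
    (hIC : ∀ (t' : ∀ i, Fin (d i) → ℝ), (∀ j, t' j ∈ T j) → ∀ i : Fin n, ∀ ti ∈ T i,
      (∑ k, xd t' i k * ti k) + c i (xd t' i) - pd t' i ≤
      (∑ k, xd (Function.update t' i ti) i k * ti k)
          + c i (xd (Function.update t' i ti) i) - pd (Function.update t' i ti) i)
    -- the truthful utilities
    (ut : Fin n → (∀ i, Fin (d i) → ℝ) → ℝ)
    (hut : ∀ i t, ut i t = (∑ k, t i k * xd t i k) + c i (xd t i) - pd t i)
    -- the conjugate pricing rules (they depend on `t` only through `t₋ᵢ`)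
    (pm : ∀ i : Fin n, (Fin (d i) → ℝ) → (∀ j, Fin (d j) → ℝ) → ℝ)
    (hpm : ∀ (i : Fin n) (x : Fin (d i) → ℝ) (t : ∀ j, Fin (d j) → ℝ),
      pm i x t = c i x +
        sSup ((fun s : Fin (d i) → ℝ =>
          (∑ k, s k * x k) - ut i (Function.update t i s)) '' T i)) :
    ∀ t : ∀ i, Fin (d i) → ℝ, (∀ j, t j ∈ T j) → ∀ i : Fin n,
      pm i (xd t i) t = pd t i := by
  intro t ht i
  have key : sSup ((fun s : Fin (d i) → ℝ =>
      (∑ k, s k * xd t i k) - ut i (Function.update t i s)) '' T i)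
      = pd t i - c i (xd t i) := by
    apply IsGreatest.csSup_eq
    constructor
    · refine ⟨t i, ht i, ?_⟩
      dsimp only
      rw [Function.update_eq_self, hut]
      ring
    · rintro y ⟨s, hs, rfl⟩
      have hic := hIC t ht i s hs
      have hut' : ut i (Function.update t i s)
          = (∑ k, xd (Function.update t i s) i k * s k)
            + c i (xd (Function.update t i s) i) - pd (Function.update t i s) i := by
        rw [hut]
        congr 1
        congr 1
        refine Finset.sum_congr rfl fun k _ => ?_
        rw [Function.update_self, mul_comm]
      dsimp only
      rw [hut']
      have hsum : (∑ k, s k * xd t i k) = ∑ k, xd t i k * s k :=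
        Finset.sum_congr rfl fun k _ => mul_comm _ _
      rw [hsum]
      linarith
  rw [hpm, key]
  ring
end

section
/- (Allocation optimality under the conjugate pricing rule.) Let M^d = (x^d, p^d) be a truthful direct mechanism. For each i and each type profile t define ũ_i(t) = ⟨t_i, x^d_i(t)⟩ + c_i(x^d_i(t)) − p^d_i(t), and define p^m_i(x; t_{-i}) = c_i(x) + sup_{t'_i ∈ 𝒯_i} ( ⟨t'_i, x⟩ − ũ_i(t'_i, t_{-i}) ). Then for every type profile t ∈ 𝒯, every i, and every x ∈ 𝒳_i: ⟨t_i, x⟩ + c_i(x) − p^m_i(x; t_{-i}) ≤ ⟨t_i, x^d_i(t)⟩ + c_i(x^d_i(t)) − p^m_i(x^d_i(t); t_{-i}); that is, x^d_i(t) maximizes player i's utility over 𝒳_i under the pricing rule p^m_i(·; t_{-i}). -/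
open Finset

/-- Allocation optimality under the conjugate pricing rule.
For a truthful direct mechanism `(xd, pd)`, with truthful utilities
`ũᵢ(t) = ⟨tᵢ, xdᵢ(t)⟩ + cᵢ(xdᵢ(t)) − pdᵢ(t)` and conjugate pricing rules
`pmᵢ(x; t₋ᵢ) = cᵢ(x) + sup_{t'ᵢ ∈ 𝒯ᵢ} (⟨t'ᵢ, x⟩ − ũᵢ(t'ᵢ, t₋ᵢ))`, the allocation
`xdᵢ(t)` maximizes player `i`'s utility over `𝒳ᵢ` under the pricing rule
`pmᵢ(·; t₋ᵢ)`. -/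
theorem allocation_optimality_under_conjugate_pricing
    (n : ℕ) (d : Fin n → ℕ)
    (T X : ∀ i : Fin n, Set (Fin (d i) → ℝ))
    (hTne : ∀ i, (T i).Nonempty) (hTconv : ∀ i, Convex ℝ (T i))
    (hTcomp : ∀ i, IsCompact (T i))
    (hXne : ∀ i, (X i).Nonempty) (hXconv : ∀ i, Convex ℝ (X i))
    (hXcomp : ∀ i, IsCompact (X i))
    (hX0 : ∀ i, (0 : Fin (d i) → ℝ) ∈ X i)
    (c : ∀ i : Fin n, (Fin (d i) → ℝ) → ℝ)
    (hc : ∀ i, ContinuousOn (c i) (X i))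
    (hc0 : ∀ i, c i (0 : Fin (d i) → ℝ) = 0)
    -- the truthful direct mechanism
    (xd : (∀ i, Fin (d i) → ℝ) → ∀ i, Fin (d i) → ℝ)
    (pd : (∀ i, Fin (d i) → ℝ) → Fin n → ℝ)
    (hxd : ∀ t : ∀ i, Fin (d i) → ℝ, (∀ j, t j ∈ T j) → ∀ i, xd t i ∈ X i)
    -- IR
    (hIR : ∀ (t' : ∀ i, Fin (d i) → ℝ), (∀ j, t' j ∈ T j) → ∀ i : Fin n, ∀ ti ∈ T i,
      0 ≤ (∑ k, xd (Function.update t' i ti) i k * ti k)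
          + c i (xd (Function.update t' i ti) i) - pd (Function.update t' i ti) i)
    -- IC
    (hIC : ∀ (t' : ∀ i, Fin (d i) → ℝ), (∀ j, t' j ∈ T j) → ∀ i : Fin n, ∀ ti ∈ T i,
      (∑ k, xd t' i k * ti k) + c i (xd t' i) - pd t' i ≤
      (∑ k, xd (Function.update t' i ti) i k * ti k)
          + c i (xd (Function.update t' i ti) i) - pd (Function.update t' i ti) i)
    -- the truthful utilities
    (ut : Fin n → (∀ i, Fin (d i) → ℝ) → ℝ)
    (hut : ∀ i t, ut i t = (∑ k, t i k * xd t i k) + c i (xd t i) - pd t i)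
    -- the conjugate pricing rules (they depend on `t` only through `t₋ᵢ`)
    (pm : ∀ i : Fin n, (Fin (d i) → ℝ) → (∀ j, Fin (d j) → ℝ) → ℝ)
    (hpm : ∀ (i : Fin n) (x : Fin (d i) → ℝ) (t : ∀ j, Fin (d j) → ℝ),
      pm i x t = c i x +
        sSup ((fun s : Fin (d i) → ℝ =>
          (∑ k, s k * x k) - ut i (Function.update t i s)) '' T i)) :
    ∀ t : ∀ i, Fin (d i) → ℝ, (∀ j, t j ∈ T j) → ∀ i : Fin n, ∀ x ∈ X i,
      (∑ k, t i k * x k) + c i x - pm i x t ≤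
      (∑ k, t i k * xd t i k) + c i (xd t i) - pm i (xd t i) t := by
  intro t ht i x hx
  have hupd : Function.update t i (t i) = t := Function.update_eq_self i t
  -- nonnegativity of truthful utility
  have hnn : ∀ s ∈ T i, 0 ≤ ut i (Function.update t i s) := by
    intro s hs
    have := hIR t ht i s hs
    rw [hut]
    simpa [Function.update_self, mul_comm] using this
  -- key IC consequence
  have hkey : ∀ s ∈ T i,
      (∑ k, s k * xd t i k) - ut i (Function.update t i s) ≤ pd t i - c i (xd t i) := by
    intro s hs
    have := hIC t ht i s hs
    rw [hut]
    simp only [Function.update_self]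
    have h1 : (∑ k, xd t i k * s k) = ∑ k, s k * xd t i k := by
      simp [mul_comm]
    have h2 : (∑ k, xd (Function.update t i s) i k * s k)
        = ∑ k, s k * xd (Function.update t i s) i k := by
      simp [mul_comm]
    linarith [this, h1.symm ▸ this]
  -- boundedness of the conjugate sets
  have hbdd : ∀ y : Fin (d i) → ℝ, BddAbove
      ((fun s : Fin (d i) → ℝ => (∑ k, s k * y k) - ut i (Function.update t i s)) '' T i) := by
    intro y
    obtain ⟨M, hM⟩ := (hTcomp i).bddAbove_image
      (Continuous.continuousOn
        (continuous_finset_sum _ fun k _ => (continuous_apply k).mul continuous_const))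
    refine ⟨M, ?_⟩
    rintro _ ⟨s, hs, rfl⟩
    have h1 := hnn s hs
    have h2 : (∑ k, s k * y k) ≤ M := hM ⟨s, hs, rfl⟩
    simp only
    linarith
  have hne : ∀ y : Fin (d i) → ℝ,
      ((fun s : Fin (d i) → ℝ => (∑ k, s k * y k) - ut i (Function.update t i s)) '' T i).Nonempty :=
    fun y => (hTne i).image _
  -- LHS ≤ ut i t
  have hL : (∑ k, t i k * x k) + c i x - pm i x t ≤ ut i t := by
    rw [hpm]
    have hmem : (∑ k, t i k * x k) - ut i t ∈
        (fun s : Fin (d i) → ℝ => (∑ k, s k * x k) - ut i (Function.update t i s)) '' T i := by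
      refine ⟨t i, ht i, ?_⟩
      simp only [hupd]
    have := le_csSup (hbdd x) hmem
    linarith
  -- ut i t ≤ RHS
  have hR : ut i t ≤ (∑ k, t i k * xd t i k) + c i (xd t i) - pm i (xd t i) t := by
    rw [hpm]
    have hsup : sSup ((fun s : Fin (d i) → ℝ =>
        (∑ k, s k * xd t i k) - ut i (Function.update t i s)) '' T i)
        ≤ pd t i - c i (xd t i) := by
      refine csSup_le (hne _) ?_
      rintro _ ⟨s, hs, rfl⟩
      exact hkey s hs
    rw [hut]
    linarith
  linarith
end
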